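/- arXiv:2208.14329 — 6 statements merged into one kernel-verified Lean document; each statement's English description precedes it below -/
import Mathlib

section
/- In the point-treatment causal setup with censoring, the inverse probability weighting identification holds: E[1_{A=1} · 1_{C=0} · Y / (g_A · g_C)] = E[Y*], where Y* is the potential outcome under treatment and no censoring. -/
/-!
Condition twice. Given σ(L, A), the censoring indicator 1_{C=0} is independent of Y*, so
E[1_{C=0} Y* | L, A] = g_C · E[Y* | L, A] and the weight 1/g_C cancels; given σ(L), likewise
E[1_{A=1} Y* | L] = g_A · E[Y* | L] and 1/g_A cancels. Positivity keeps the weights bounded, which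
is what allows pulling them out of the conditional expectations.
-/

open MeasureTheory ProbabilityTheory Set

section

variable {Ω : Type*} [MeasurableSpace Ω]

theorem map_restrict_eq_smul_map_of_Iio_rat {ν : Measure Ω} [IsProbabilityMeasure ν]
    {f : Ω → ℝ} (hf : Measurable f) {T : Set Ω}
    (h : ∀ q : ℚ, ν (f ⁻¹' Iio (q : ℝ) ∩ T) = ν (f ⁻¹' Iio (q : ℝ)) * ν T) :
    (ν.restrict T).map f = ν T • ν.map f := by
  refine ext_of_generate_finite _
    (BorelSpace.measurable_eq.trans Real.borel_eq_generateFrom_Iio_rat) Real.isPiSystem_Iio_rat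
    ?_ (by simp [Measure.map_apply hf MeasurableSet.univ])
  simp only [mem_iUnion, mem_singleton_iff, forall_exists_index]
  rintro _ q rfl
  rw [Measure.map_apply hf measurableSet_Iio, Measure.restrict_apply (hf measurableSet_Iio),
    Measure.smul_apply, Measure.map_apply hf measurableSet_Iio, smul_eq_mul, h q, mul_comm]

theorem integral_indicator_eq_mul_of_Iio_rat {ν : Measure Ω} [IsProbabilityMeasure ν]
    {f : Ω → ℝ} (hf : Measurable f) {T : Set Ω} (hT : MeasurableSet T)
    (h : ∀ q : ℚ, ν (f ⁻¹' Iio (q : ℝ) ∩ T) = ν (f ⁻¹' Iio (q : ℝ)) * ν T) :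
    ∫ ω, T.indicator f ω ∂ν = (∫ ω, f ω ∂ν) * ∫ ω, T.indicator 1 ω ∂ν := by
  calc ∫ ω, T.indicator f ω ∂ν
      = ∫ x, x ∂(ν.restrict T).map f := by
        rw [integral_indicator hT]
        exact (integral_map hf.aemeasurable aestronglyMeasurable_id).symm
    _ = (∫ ω, f ω ∂ν) * ∫ ω, T.indicator 1 ω ∂ν := by
        rw [map_restrict_eq_smul_map_of_Iio_rat hf h, integral_smul_measure,
          integral_indicator_one hT, smul_eq_mul, mul_comm, measureReal_def]
        congr 1
        exact integral_map hf.aemeasurable aestronglyMeasurable_id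

end

section

variable {Ω : Type*} {m mΩ : MeasurableSpace Ω} [StandardBorelSpace Ω] {μ : Measure Ω}
  [IsFiniteMeasure μ]

theorem condExp_indicator_ae_eq_mul_of_condIndepFun (hm : m ≤ mΩ) {β : Type*}
    [MeasurableSpace β] {f : Ω → ℝ} {g : Ω → β} (hf : Measurable f) (hg : Measurable g)
    (hfi : Integrable f μ) (h : CondIndepFun m hm f g μ) {s : Set β} (hs : MeasurableSet s) :
    μ[(g ⁻¹' s).indicator f | m] =ᵐ[μ] μ[f | m] * μ[(g ⁻¹' s).indicator 1 | m] := by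
  have hT : MeasurableSet (g ⁻¹' s) := hg hs
  -- Countably many thresholds suffice, so one null set serves all of them.
  have hindep : ∀ᵐ ω ∂μ, ∀ q : ℚ, condExpKernel μ m ω (f ⁻¹' Iio (q : ℝ) ∩ g ⁻¹' s)
      = condExpKernel μ m ω (f ⁻¹' Iio (q : ℝ)) * condExpKernel μ m ω (g ⁻¹' s) :=
    ae_all_iff.2 fun q => ae_of_ae_trim hm
      (Kernel.indepFun_iff_measure_inter_preimage_eq_mul.1 h _ _ measurableSet_Iio hs)
  filter_upwards [hindep, condExp_ae_eq_integral_condExpKernel hm (hfi.indicator hT),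
    condExp_ae_eq_integral_condExpKernel hm hfi,
    condExp_ae_eq_integral_condExpKernel (f := (g ⁻¹' s).indicator (1 : Ω → ℝ)) hm
      ((integrable_const 1).indicator hT)]
    with ω hω hfT hf' hT'
  rw [hfT, Pi.mul_apply, hf', hT']
  exact integral_indicator_eq_mul_of_Iio_rat hf hT hω

theorem integral_mul_indicator_div_eq_of_condIndepFun (hm : m ≤ mΩ) {β : Type*}
    [MeasurableSpace β] {f : Ω → ℝ} {g : Ω → β} (hf : Measurable f) (hg : Measurable g)
    (hfi : Integrable f μ) (h : CondIndepFun m hm f g μ) {s : Set β} (hs : MeasurableSet s)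
    {π : Ω → ℝ} (hπ : π =ᵐ[μ] μ[(g ⁻¹' s).indicator 1 | m]) {η : ℝ} (hη : 0 < η)
    (hπη : ∀ᵐ ω ∂μ, η ≤ π ω) {w : Ω → ℝ} (hw : AEStronglyMeasurable[m] w μ) {B : ℝ}
    (hwB : ∀ᵐ ω ∂μ, |w ω| ≤ B) :
    ∫ ω, w ω * (g ⁻¹' s).indicator f ω / π ω ∂μ = ∫ ω, w ω * f ω ∂μ := by
  have hπm : AEStronglyMeasurable[m] π μ :=
    stronglyMeasurable_condExp.aestronglyMeasurable.congr hπ.symm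
  have hwπB : ∀ᵐ ω ∂μ, ‖w ω / π ω‖ ≤ B / η := by
    filter_upwards [hwB, hπη] with ω hwω hπω
    rw [Real.norm_eq_abs, abs_div, abs_of_pos (hη.trans_le hπω)]
    exact div_le_div₀ ((abs_nonneg _).trans hwω) hwω hη hπω
  calc ∫ ω, w ω * (g ⁻¹' s).indicator f ω / π ω ∂μ
      = ∫ ω, μ[w / π * (g ⁻¹' s).indicator f | m] ω ∂μ := by
        rw [integral_condExp hm]
        simp only [Pi.mul_apply, Pi.div_apply, mul_div_right_comm]
    _ = ∫ ω, w ω * μ[f | m] ω ∂μ := by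
        refine integral_congr_ae ?_
        filter_upwards [condExp_stronglyMeasurable_mul_of_bound₀ hm (hw.div₀ hπm)
            (hfi.indicator (hg hs)) _ hwπB,
          condExp_indicator_ae_eq_mul_of_condIndepFun hm hf hg hfi h hs, hπ, hπη]
          with ω hpull hfactor hπω hηπ
        rw [hpull, Pi.mul_apply, hfactor, Pi.mul_apply, Pi.div_apply, ← hπω]
        field_simp [(hη.trans_le hηπ).ne']
    _ = ∫ ω, w ω * f ω ∂μ :=
        (integral_congr_ae (condExp_stronglyMeasurable_mul_of_bound₀ hm hw hfi B hwB).symm).trans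
          (integral_condExp hm)

end

theorem integral_indicator_mul_indicator_div_mul_eq_of_condIndepFun {Ω : Type*}
    {m₁ m₂ mΩ : MeasurableSpace Ω} [StandardBorelSpace Ω] (hm₁₂ : m₁ ≤ m₂) (hm₂ : m₂ ≤ mΩ)
    {μ : Measure Ω} [IsFiniteMeasure μ] {β₁ β₂ : Type*} [MeasurableSpace β₁]
    [MeasurableSpace β₂] {f : Ω → ℝ} (hf : Measurable f) (hfi : Integrable f μ) {g₁ : Ω → β₁}
    {g₂ : Ω → β₂} (hg₁ : Measurable[m₂] g₁) (hg₂ : Measurable g₂)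
    (h₁ : CondIndepFun m₁ (hm₁₂.trans hm₂) f g₁ μ) (h₂ : CondIndepFun m₂ hm₂ f g₂ μ)
    {s₁ : Set β₁} {s₂ : Set β₂} (hs₁ : MeasurableSet s₁) (hs₂ : MeasurableSet s₂)
    {π₁ π₂ : Ω → ℝ} (hπ₁ : π₁ =ᵐ[μ] μ[(g₁ ⁻¹' s₁).indicator 1 | m₁])
    (hπ₂ : π₂ =ᵐ[μ] μ[(g₂ ⁻¹' s₂).indicator 1 | m₂]) {η : ℝ} (hη : 0 < η)
    (hπ₁η : ∀ᵐ ω ∂μ, η ≤ π₁ ω) (hπ₂η : ∀ᵐ ω ∂μ, η ≤ π₂ ω) :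
    ∫ ω, (g₁ ⁻¹' s₁).indicator 1 ω * (g₂ ⁻¹' s₂).indicator f ω / (π₁ ω * π₂ ω) ∂μ
      = ∫ ω, f ω ∂μ := by
  have hπ₁m : AEStronglyMeasurable[m₂] π₁ μ :=
    (stronglyMeasurable_condExp.mono hm₁₂).aestronglyMeasurable.congr hπ₁.symm
  have hwm : AEStronglyMeasurable[m₂] (fun ω => (g₁ ⁻¹' s₁).indicator 1 ω / π₁ ω) μ :=
    (measurable_const.indicator (hg₁ hs₁)).aestronglyMeasurable.div₀ hπ₁m
  have hwB : ∀ᵐ ω ∂μ, |(g₁ ⁻¹' s₁).indicator 1 ω / π₁ ω| ≤ 1 / η := by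
    filter_upwards [hπ₁η] with ω hω
    rw [abs_div, abs_of_pos (hη.trans_le hω)]
    refine div_le_div₀ zero_le_one ?_ hη hω
    by_cases h : ω ∈ g₁ ⁻¹' s₁ <;> simp [h]
  calc ∫ ω, (g₁ ⁻¹' s₁).indicator 1 ω * (g₂ ⁻¹' s₂).indicator f ω / (π₁ ω * π₂ ω) ∂μ
      = ∫ ω, (g₁ ⁻¹' s₁).indicator 1 ω / π₁ ω * (g₂ ⁻¹' s₂).indicator f ω / π₂ ω ∂μ := by
        simp only [div_mul_eq_mul_div, div_div]
    _ = ∫ ω, 1 * (g₁ ⁻¹' s₁).indicator f ω / π₁ ω ∂μ := by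
        rw [integral_mul_indicator_div_eq_of_condIndepFun hm₂ hf hg₂ hfi h₂ hs₂ hπ₂ hη hπ₂η hwm
          hwB]
        congr 1
        ext ω
        by_cases h : ω ∈ g₁ ⁻¹' s₁ <;> simp [h, div_eq_inv_mul]
    _ = ∫ ω, f ω ∂μ := by
        simpa using integral_mul_indicator_div_eq_of_condIndepFun (hm₁₂.trans hm₂) hf
          (hg₁.mono hm₂ le_rfl) hfi h₁ hs₁ hπ₁ hη hπ₁η (w := fun _ => 1)
          aestronglyMeasurable_const (B := 1) (by simp)

theorem ipw_identification_with_censoring_general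
    {Ω S : Type*} [MeasurableSpace Ω] [StandardBorelSpace Ω]
    [MeasurableSpace S]
    (P : Measure Ω) [IsProbabilityMeasure P]
    (L : Ω → S) (hL : Measurable L)
    (A : Ω → Bool) (hA : Measurable A)
    (C : Ω → Bool) (hC : Measurable C)
    (Y Ystar : Ω → ℝ) (hYstar : Measurable Ystar)
    (hYstarbdd : ∃ B : ℝ, ∀ᵐ ω ∂P, |Ystar ω| ≤ B)
    -- consistency: Y = Y* a.s. on {A = 1, C = 0}
    (hcons : ∀ᵐ ω ∂P, A ω = true → C ω = false → Y ω = Ystar ω)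
    -- exchangeability: Y* ⫫ A | σ(L) and Y* ⫫ C | σ(L, A)
    (hexchA : CondIndepFun (MeasurableSpace.comap L inferInstance) hL.comap_le Ystar A P)
    (hexchC : CondIndepFun (MeasurableSpace.comap (fun ω => (L ω, A ω)) inferInstance)
      (hL.prodMk hA).comap_le Ystar C P)
    -- propensities: g_A is a version of E[1_{A=1} | σ(L)],
    -- g_C a version of E[1_{C=0} | σ(L, A)]
    (gA gC : Ω → ℝ)
    (hgA : gA =ᵐ[P]
      P[(fun ω => if A ω then (1 : ℝ) else 0) | MeasurableSpace.comap L inferInstance])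
    (hgC : gC =ᵐ[P]
      P[(fun ω => if C ω then (0 : ℝ) else 1) |
        MeasurableSpace.comap (fun ω => (L ω, A ω)) inferInstance])
    -- positivity
    (η : ℝ) (hη : 0 < η) (hposA : ∀ᵐ ω ∂P, η ≤ gA ω) (hposC : ∀ᵐ ω ∂P, η ≤ gC ω) :
    ∫ ω, (if A ω then (1 : ℝ) else 0) * (if C ω then (0 : ℝ) else 1) * Y ω / (gA ω * gC ω) ∂P
      = ∫ ω, Ystar ω ∂P := by
  have hLA : Measurable[MeasurableSpace.comap (fun ω => (L ω, A ω)) inferInstance]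
      (fun ω => (L ω, A ω)) := comap_measurable _
  obtain ⟨B, hB⟩ := hYstarbdd
  have hYi : Integrable Ystar P :=
    .of_bound hYstar.aestronglyMeasurable B (hB.mono fun ω h => by rwa [Real.norm_eq_abs])
  have hindA : (fun ω => if A ω then (1 : ℝ) else 0) = (A ⁻¹' {true}).indicator 1 := by
    ext ω; cases h : A ω <;> simp [h]
  have hindC : (fun ω => if C ω then (0 : ℝ) else 1) = (C ⁻¹' {false}).indicator 1 := by
    ext ω; cases h : C ω <;> simp [h]
  rw [hindA] at hgA
  rw [hindC] at hgC
  calc ∫ ω, (if A ω then (1 : ℝ) else 0) * (if C ω then (0 : ℝ) else 1) * Y ω / (gA ω * gC ω) ∂P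
      = ∫ ω, (A ⁻¹' {true}).indicator 1 ω * (C ⁻¹' {false}).indicator Ystar ω
          / (gA ω * gC ω) ∂P := by
        refine integral_congr_ae ?_
        filter_upwards [hcons] with ω hω
        cases hAω : A ω <;> cases hCω : C ω <;> simp [hAω, hCω, hω]
    _ = ∫ ω, Ystar ω ∂P :=
        integral_indicator_mul_indicator_div_mul_eq_of_condIndepFun
          (measurable_fst.comp hLA).comap_le _ hYstar hYi (measurable_snd.comp hLA) hC hexchA
          hexchC (measurableSet_singleton true) (measurableSet_singleton false) hgA hgC hη hposA
          hposC

/-- Single-time-period inverse probability weighting identification with censoring: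
`E[1_{A=1} · 1_{C=0} · Y / (g_A · g_C)] = E[Y*]`. -/
theorem ipw_identification_with_censoring
    {Ω S : Type*} [MeasurableSpace Ω] [StandardBorelSpace Ω] [Nonempty Ω]
    [MeasurableSpace S] [StandardBorelSpace S]
    (P : Measure Ω) [IsProbabilityMeasure P]
    (L : Ω → S) (hL : Measurable L)
    (A : Ω → Bool) (hA : Measurable A)
    (C : Ω → Bool) (hC : Measurable C)
    (Y Ystar : Ω → ℝ) (hY : Measurable Y) (hYstar : Measurable Ystar)
    (hYbdd : ∃ B : ℝ, ∀ᵐ ω ∂P, |Y ω| ≤ B)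
    (hYstarbdd : ∃ B : ℝ, ∀ᵐ ω ∂P, |Ystar ω| ≤ B)
    -- consistency: Y = Y* a.s. on {A = 1, C = 0}
    (hcons : ∀ᵐ ω ∂P, A ω = true → C ω = false → Y ω = Ystar ω)
    -- exchangeability: Y* ⫫ A | σ(L) and Y* ⫫ C | σ(L, A)
    (hexchA : CondIndepFun (MeasurableSpace.comap L inferInstance) hL.comap_le Ystar A P)
    (hexchC : CondIndepFun (MeasurableSpace.comap (fun ω => (L ω, A ω)) inferInstance)
      (hL.prodMk hA).comap_le Ystar C P)
    -- propensities: g_A is a version of E[1_{A=1} | σ(L)],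
    -- g_C a version of E[1_{C=0} | σ(L, A)]
    (gA gC : Ω → ℝ)
    (hgA : gA =ᵐ[P]
      P[(fun ω => if A ω then (1 : ℝ) else 0) | MeasurableSpace.comap L inferInstance])
    (hgC : gC =ᵐ[P]
      P[(fun ω => if C ω then (0 : ℝ) else 1) |
        MeasurableSpace.comap (fun ω => (L ω, A ω)) inferInstance])
    -- positivity
    (η : ℝ) (hη : 0 < η) (hposA : ∀ᵐ ω ∂P, η ≤ gA ω) (hposC : ∀ᵐ ω ∂P, η ≤ gC ω) :
    ∫ ω, (if A ω then (1 : ℝ) else 0) * (if C ω then (0 : ℝ) else 1) * Y ω / (gA ω * gC ω) ∂P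
      = ∫ ω, Ystar ω ∂P :=
  ipw_identification_with_censoring_general P L hL A hA C hC Y Ystar hYstar hYstarbdd hcons hexchA
    hexchC gA gC hgA hgC η hη hposA hposC
end

section
/- In the point-treatment causal setup, for any measurable subset w of S with P(L ∈ w) > 0, the subgroup-specific potential outcome mean is identified by the ratio of inverse probability weighted expectations: E[Y¹ | L ∈ w] = E[1_{L∈w} · 1_{A=1} · Y / e] / E[1_{L∈w} · 1_{A=1} / e]. -/
/-!
Write `e = P⟦A = 1 | σ(L)⟧`. Exchangeability makes `{A = 1}` conditionally independent of
`σ(Y¹)` given `σ(L)`, which upgrades to `P⟦A = 1 | σ(L) ⊔ σ(Y¹)⟧ = e` by checking set integrals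
on the π-system of intersections `a ∩ b`, `a ∈ σ(L)`, `b ∈ σ(Y¹)`. Consequently
`E[F 1_{A=1}] = E[F e]` for every `σ(L) ⊔ σ(Y¹)`-measurable `F`. Taking `F = 1_{L∈w} X / e`
gives `E[1_{L∈w} 1_{A=1} X / e] = E[1_{L∈w} X]`; for `X = Y¹` (consistency turns `Y` into `Y¹`
on `{A = 1}`) this is the numerator, for `X = 1` the denominator `P(L ∈ w)`.
-/

open MeasureTheory ProbabilityTheory MeasurableSpace Set

section PiSystem

variable {Ω : Type*}

lemma isPiSystem_image2_inter_measurableSet (m₁ m₂ : MeasurableSpace Ω) :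
    IsPiSystem (image2 (· ∩ ·) {s | MeasurableSet[m₁] s} {s | MeasurableSet[m₂] s}) := by
  rintro _ ⟨a, ha, b, hb, rfl⟩ _ ⟨a', ha', b', hb', rfl⟩ -
  exact ⟨a ∩ a', ha.inter ha', b ∩ b', hb.inter hb', (inter_inter_inter_comm a b a' b').symm⟩

lemma MeasurableSpace.sup_eq_generateFrom_image2_inter (m₁ m₂ : MeasurableSpace Ω) :
    m₁ ⊔ m₂ =
      generateFrom (image2 (· ∩ ·) {s | MeasurableSet[m₁] s} {s | MeasurableSet[m₂] s}) := by
  refine le_antisymm (sup_le ?_ ?_) (generateFrom_le ?_)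
  · exact fun a ha ↦ measurableSet_generateFrom ⟨a, ha, univ, .univ, inter_univ a⟩
  · exact fun b hb ↦ measurableSet_generateFrom ⟨univ, .univ, b, hb, univ_inter b⟩
  · rintro _ ⟨a, ha, b, hb, rfl⟩
    exact (le_sup_left (a := m₁) a ha).inter (le_sup_right (b := m₂) b hb)

end PiSystem

section SetIntegral

variable {Ω E : Type*} [NormedAddCommGroup E] [NormedSpace ℝ E] {m mΩ : MeasurableSpace Ω}
  {μ : Measure Ω} {f g : Ω → E} {C : Set (Set Ω)}

theorem setIntegral_eq_setIntegral_of_isPiSystem (hm : m ≤ mΩ) (h_gen : m = generateFrom C)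
    (hC : IsPiSystem C) (hf : Integrable f μ) (hg : Integrable g μ)
    (h_basic : ∀ t ∈ C, ∫ x in t, f x ∂μ = ∫ x in t, g x ∂μ)
    (h_univ : ∫ x, f x ∂μ = ∫ x, g x ∂μ) {s : Set Ω} (hs : MeasurableSet[m] s) :
    ∫ x in s, f x ∂μ = ∫ x in s, g x ∂μ := by
  induction s, hs using induction_on_inter h_gen hC with
  | empty => simp
  | basic t ht => exact h_basic t ht
  | compl t ht iht =>
    rw [setIntegral_compl (hm t ht) hf, setIntegral_compl (hm t ht) hg, iht, h_univ]
  | iUnion t htd htm iht =>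
    rw [integral_iUnion (fun i ↦ hm _ (htm i)) htd hf.integrableOn,
      integral_iUnion (fun i ↦ hm _ (htm i)) htd hg.integrableOn]
    exact tsum_congr iht

theorem integral_cond_eq_setIntegral_div (s : Set Ω) (f : Ω → ℝ) :
    ∫ x, f x ∂(μ[|s]) = (∫ x in s, f x ∂μ) / μ.real s := by
  rw [ProbabilityTheory.cond, integral_smul_measure, ENNReal.toReal_inv, smul_eq_mul,
    inv_mul_eq_div, measureReal_def]

end SetIntegral

section CondIndep

variable {Ω : Type*} {m m₁ m₂ mΩ : MeasurableSpace Ω} [StandardBorelSpace Ω]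
  {μ : Measure Ω} [IsFiniteMeasure μ] {t : Set Ω}

theorem condExp_indicator_sup_ae_eq_of_condIndep (hm : m ≤ mΩ) (hm₁ : m₁ ≤ mΩ) (hm₂ : m₂ ≤ mΩ)
    (h : CondIndep m m₁ m₂ hm μ) (ht : MeasurableSet[m₂] t) :
    μ⟦t | m ⊔ m₁⟧ =ᵐ[μ] μ⟦t | m⟧ := by
  have h_int : Integrable (t.indicator fun _ ↦ (1 : ℝ)) μ :=
    (integrable_const 1).indicator (hm₂ t ht)
  refine (ae_eq_condExp_of_forall_setIntegral_eq (sup_le hm hm₁) h_int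
    (fun _ _ _ ↦ integrable_condExp.integrableOn) (fun s hs _ ↦ ?_)
    (stronglyMeasurable_condExp.mono (le_sup_left : m ≤ m ⊔ m₁)).aestronglyMeasurable).symm
  refine setIntegral_eq_setIntegral_of_isPiSystem (sup_le hm hm₁)
    (sup_eq_generateFrom_image2_inter m m₁) (isPiSystem_image2_inter_measurableSet m m₁)
    integrable_condExp h_int ?_ (integral_condExp hm) hs
  rintro _ ⟨a, ha, b, hb, rfl⟩
  have hb' : MeasurableSet b := hm₁ b hb
  have h_ind : b.indicator (fun _ ↦ (1 : ℝ)) * (μ⟦t | m⟧) = b.indicator (μ⟦t | m⟧) := by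
    ext x; by_cases hx : x ∈ b <;> simp [hx]
  have h_int_mul : Integrable (b.indicator (fun _ ↦ (1 : ℝ)) * (μ⟦t | m⟧)) μ := by
    rw [h_ind]; exact integrable_condExp.indicator hb'
  have h_mul : μ[b.indicator (fun _ ↦ (1 : ℝ)) * (μ⟦t | m⟧) | m] =ᵐ[μ] μ⟦b ∩ t | m⟧ :=
    (condExp_mul_of_stronglyMeasurable_right stronglyMeasurable_condExp
      h_int_mul ((integrable_const 1).indicator hb')).trans
      ((condIndep_iff m m₁ m₂ hm hm₁ hm₂ μ).1 h b t hb ht).symm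
  calc ∫ x in a ∩ b, (μ⟦t | m⟧) x ∂μ
      = ∫ x in a, μ[b.indicator (fun _ ↦ (1 : ℝ)) * (μ⟦t | m⟧) | m] x ∂μ := by
        rw [setIntegral_condExp hm h_int_mul ha, h_ind, setIntegral_indicator hb']
    _ = ∫ x in a, (μ⟦b ∩ t | m⟧) x ∂μ :=
        setIntegral_congr_ae (hm a ha) (h_mul.mono fun _ h _ ↦ h)
    _ = ∫ x in a ∩ b, t.indicator (fun _ ↦ (1 : ℝ)) x ∂μ := by
        rw [setIntegral_condExp hm ((integrable_const 1).indicator (hb'.inter (hm₂ t ht))) ha,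
          setIntegral_indicator (hm₂ t ht), setIntegral_indicator (hb'.inter (hm₂ t ht)),
          inter_assoc]

theorem integral_mul_indicator_eq_integral_mul_condExp_of_condIndep (hm : m ≤ mΩ)
    (hm₁ : m₁ ≤ mΩ) (hm₂ : m₂ ≤ mΩ) (h : CondIndep m m₁ m₂ hm μ) (ht : MeasurableSet[m₂] t)
    {F : Ω → ℝ} (hF : StronglyMeasurable[m ⊔ m₁] F)
    (hFt : Integrable (F * t.indicator fun _ ↦ (1 : ℝ)) μ) :
    ∫ x, F x * t.indicator (fun _ ↦ (1 : ℝ)) x ∂μ = ∫ x, F x * (μ⟦t | m⟧) x ∂μ :=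
  calc ∫ x, F x * t.indicator (fun _ ↦ (1 : ℝ)) x ∂μ
      = ∫ x, μ[F * t.indicator fun _ ↦ (1 : ℝ) | m ⊔ m₁] x ∂μ :=
        (integral_condExp (sup_le hm hm₁)).symm
    _ = ∫ x, (F * μ⟦t | m ⊔ m₁⟧) x ∂μ :=
        integral_congr_ae (condExp_mul_of_stronglyMeasurable_left hF hFt
          ((integrable_const 1).indicator (hm₂ t ht)))
    _ = ∫ x, F x * (μ⟦t | m⟧) x ∂μ :=
        integral_congr_ae <| (condExp_indicator_sup_ae_eq_of_condIndep hm hm₁ hm₂ h ht).mono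
          fun x hx ↦ by simp [hx]

theorem integral_indicator_mul_indicator_mul_div_condExp_of_condIndep (hm : m ≤ mΩ)
    (hm₁ : m₁ ≤ mΩ) (hm₂ : m₂ ≤ mΩ) (h : CondIndep m m₁ m₂ hm μ) (ht : MeasurableSet[m₂] t)
    {s : Set Ω} (hs : MeasurableSet[m] s) {X : Ω → ℝ} (hX : StronglyMeasurable[m₁] X)
    (hX_int : Integrable X μ) {η : ℝ} (hη : 0 < η) (h_pos : ∀ᵐ x ∂μ, η ≤ (μ⟦t | m⟧) x) :
    ∫ x, s.indicator (fun _ ↦ (1 : ℝ)) x * t.indicator (fun _ ↦ (1 : ℝ)) x * X x / (μ⟦t | m⟧) x ∂μ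
      = ∫ x in s, X x ∂μ := by
  set e := μ⟦t | m⟧
  set F : Ω → ℝ := fun x ↦ s.indicator (fun _ ↦ 1) x / e x * X x
  have hF : StronglyMeasurable[m ⊔ m₁] F :=
    (((stronglyMeasurable_const.indicator hs).div stronglyMeasurable_condExp).mono
      (le_sup_left : m ≤ m ⊔ m₁)).mul (hX.mono le_sup_right)
  have h_weight : ∀ᵐ x ∂μ, ‖t.indicator (fun _ ↦ (1 : ℝ)) x * s.indicator (fun _ ↦ 1) x / e x‖
      ≤ η⁻¹ := by
    filter_upwards [h_pos] with x hx
    have he : 0 < e x := hη.trans_le hx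
    rw [norm_div, Real.norm_of_nonneg he.le, div_le_iff₀ he]
    calc ‖t.indicator (fun _ ↦ (1 : ℝ)) x * s.indicator (fun _ ↦ 1) x‖ ≤ 1 := by
          by_cases hxt : x ∈ t <;> by_cases hxs : x ∈ s <;> simp [hxt, hxs]
      _ ≤ η⁻¹ * e x := by rwa [← div_eq_inv_mul, one_le_div₀ hη]
  have hFt : Integrable (F * t.indicator fun _ ↦ (1 : ℝ)) μ := by
    refine (hX_int.bdd_mul ?_ h_weight).congr (Filter.Eventually.of_forall fun x ↦ ?_)
    · exact (((stronglyMeasurable_const.indicator (hm₂ t ht)).mul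
        (stronglyMeasurable_const.indicator (hm s hs))).div
        (stronglyMeasurable_condExp.mono hm)).aestronglyMeasurable
    · simp only [F, Pi.mul_apply]; ring
  calc ∫ x, s.indicator (fun _ ↦ (1 : ℝ)) x * t.indicator (fun _ ↦ (1 : ℝ)) x * X x / e x ∂μ
      = ∫ x, F x * t.indicator (fun _ ↦ (1 : ℝ)) x ∂μ := by
        congr 1; ext x; simp only [F]; ring
    _ = ∫ x, F x * e x ∂μ :=
        integral_mul_indicator_eq_integral_mul_condExp_of_condIndep hm hm₁ hm₂ h ht hF hFt
    _ = ∫ x, s.indicator X x ∂μ := by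
        refine integral_congr_ae ?_
        filter_upwards [h_pos] with x hx
        have he : e x ≠ 0 := (hη.trans_le hx).ne'
        by_cases hxs : x ∈ s <;> simp [F, hxs, mul_right_comm _ (X x), he]
    _ = ∫ x in s, X x ∂μ := integral_indicator (hm s hs)

end CondIndep

theorem subgroup_ipw_ratio_identification_general
    {Ω S : Type*} [MeasurableSpace Ω] [StandardBorelSpace Ω]
    [MeasurableSpace S]
    (P : Measure Ω) [IsProbabilityMeasure P]
    (L : Ω → S) (hL : Measurable L)
    (A : Ω → Bool) (hA : Measurable A)
    (Y Y1 : Ω → ℝ) (hY1 : Measurable Y1)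
    (hY1bdd : ∃ B : ℝ, ∀ᵐ ω ∂P, |Y1 ω| ≤ B)
    -- consistency: Y = Y¹ a.s. on {A = 1}
    (hcons : ∀ᵐ ω ∂P, A ω = true → Y ω = Y1 ω)
    -- exchangeability: Y¹ ⫫ A | σ(L)
    (hexch : CondIndepFun (MeasurableSpace.comap L inferInstance) hL.comap_le Y1 A P)
    -- propensity score: e is a version of E[1_{A=1} | σ(L)]
    (e : Ω → ℝ)
    (he : e =ᵐ[P]
      P[(fun ω => if A ω then (1 : ℝ) else 0) | MeasurableSpace.comap L inferInstance])
    -- positivity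
    (η : ℝ) (hη : 0 < η) (hpos : ∀ᵐ ω ∂P, η ≤ e ω)
    -- the subgroup
    (w : Set S) (hw : MeasurableSet w) :
    ∫ ω, Y1 ω ∂(P[|L ⁻¹' w]) =
      (∫ ω, Set.indicator w (fun _ => (1 : ℝ)) (L ω) * (if A ω then (1 : ℝ) else 0) * Y ω / e ω ∂P) /
      (∫ ω, Set.indicator w (fun _ => (1 : ℝ)) (L ω) * (if A ω then (1 : ℝ) else 0) / e ω ∂P) := by
  have h_indep := (condIndepFun_iff_condIndep _ hL.comap_le Y1 A P).1 hexch
  have h_treated : MeasurableSet[MeasurableSpace.comap A inferInstance] (A ⁻¹' {true}) :=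
    ⟨{true}, measurableSet_singleton true, rfl⟩
  have h_ite : (fun ω => if A ω then (1 : ℝ) else 0) = (A ⁻¹' {true}).indicator fun _ => 1 := by
    ext ω; by_cases hω : A ω <;> simp [hω]
  have he' : e =ᵐ[P] P⟦A ⁻¹' {true} | MeasurableSpace.comap L ‹_›⟧ := h_ite ▸ he
  have h_subgroup (ω : Ω) :
      w.indicator (fun _ => (1 : ℝ)) (L ω) = (L ⁻¹' w).indicator (fun _ => 1) ω := rfl
  have ipw := fun X hX hX_int => integral_indicator_mul_indicator_mul_div_condExp_of_condIndep
    hL.comap_le hY1.comap_le hA.comap_le h_indep h_treated ⟨w, hw, rfl⟩ (X := X) hX hX_int hη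
    (by filter_upwards [hpos, he'] with ω h1 h2; rwa [← h2])
  obtain ⟨B, hB⟩ := hY1bdd
  have hnum :
      ∫ ω, Set.indicator w (fun _ => (1 : ℝ)) (L ω) * (if A ω then (1 : ℝ) else 0) * Y ω / e ω ∂P
        = ∫ ω in L ⁻¹' w, Y1 ω ∂P := by
    rw [← ipw Y1 (comap_measurable Y1).stronglyMeasurable
      (.of_bound hY1.aestronglyMeasurable B (by simpa using hB))]
    refine integral_congr_ae ?_
    filter_upwards [hcons, he'] with ω h1 h2
    by_cases hω : A ω <;> simp [hω, h1, h2, h_subgroup]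
  have hden :
      ∫ ω, Set.indicator w (fun _ => (1 : ℝ)) (L ω) * (if A ω then (1 : ℝ) else 0) / e ω ∂P
        = P.real (L ⁻¹' w) := by
    rw [← setIntegral_one_eq_measureReal,
      ← ipw (fun _ => 1) stronglyMeasurable_const (integrable_const 1)]
    refine integral_congr_ae ?_
    filter_upwards [he'] with ω h2
    by_cases hω : A ω <;> simp [hω, h2, h_subgroup]
  rw [hnum, hden, integral_cond_eq_setIntegral_div]

/-- Subgroup-specific inverse probability weighting identification: for a measurable
subgroup `w ⊆ S` with `P(L ∈ w) > 0`,
`E[Y¹ | L ∈ w] = E[1_{L∈w} · 1_{A=1} · Y / e] / E[1_{L∈w} · 1_{A=1} / e]`. -/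
theorem subgroup_ipw_ratio_identification
    {Ω S : Type*} [MeasurableSpace Ω] [StandardBorelSpace Ω] [Nonempty Ω]
    [MeasurableSpace S] [StandardBorelSpace S]
    (P : Measure Ω) [IsProbabilityMeasure P]
    (L : Ω → S) (hL : Measurable L)
    (A : Ω → Bool) (hA : Measurable A)
    (Y Y1 : Ω → ℝ) (hY : Measurable Y) (hY1 : Measurable Y1)
    (hYbdd : ∃ B : ℝ, ∀ᵐ ω ∂P, |Y ω| ≤ B)
    (hY1bdd : ∃ B : ℝ, ∀ᵐ ω ∂P, |Y1 ω| ≤ B)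
    -- consistency: Y = Y¹ a.s. on {A = 1}
    (hcons : ∀ᵐ ω ∂P, A ω = true → Y ω = Y1 ω)
    -- exchangeability: Y¹ ⫫ A | σ(L)
    (hexch : CondIndepFun (MeasurableSpace.comap L inferInstance) hL.comap_le Y1 A P)
    -- propensity score: e is a version of E[1_{A=1} | σ(L)]
    (e : Ω → ℝ)
    (he : e =ᵐ[P]
      P[(fun ω => if A ω then (1 : ℝ) else 0) | MeasurableSpace.comap L inferInstance])
    -- positivity
    (η : ℝ) (hη : 0 < η) (hpos : ∀ᵐ ω ∂P, η ≤ e ω)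
    -- the subgroup
    (w : Set S) (hw : MeasurableSet w) (hwpos : 0 < P (L ⁻¹' w)) :
    ∫ ω, Y1 ω ∂(P[|L ⁻¹' w]) =
      (∫ ω, Set.indicator w (fun _ => (1 : ℝ)) (L ω) * (if A ω then (1 : ℝ) else 0) * Y ω / e ω ∂P) /
      (∫ ω, Set.indicator w (fun _ => (1 : ℝ)) (L ω) * (if A ω then (1 : ℝ) else 0) / e ω ∂P) :=
  subgroup_ipw_ratio_identification_general P L hL A hA Y Y1 hY1 hY1bdd hcons hexch e he η hη hpos w
    hw
end

section
/- In the point-treatment causal setup, the g-computation (outcome regression) identification holds: if m : Ω → ℝ is σ(L)-measurable, P-almost surely bounded, and satisfies m · e = E[1_{A=1} · Y | σ(L)] P-almost surely, then E[m] = E[Y¹]. -/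
/-!
Exchangeability makes `{A = 1}` conditionally independent of `Y¹` given `σ(L)`, so conditioning
on `Y¹` as well does not change its conditional probability: `E[1_{A=1} | σ(L) ⊔ σ(Y¹)] = e`.
With consistency and the tower property this gives
`E[1_{A=1} Y | σ(L)] = E[Y¹ E[1_{A=1} | σ(L) ⊔ σ(Y¹)] | σ(L)] = e · E[Y¹ | σ(L)]`,
and positivity lets us cancel `e` in `m · e = e · E[Y¹ | σ(L)]`. Hence `m = E[Y¹ | σ(L)]` a.s.,
and taking expectations gives `E[m] = E[Y¹]`.
-/

open MeasureTheory ProbabilityTheory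

namespace MeasurableSpace

variable {α : Type*}

theorem sup_eq_generateFrom_image2_inter_s8 (m₁ m₂ : MeasurableSpace α) :
    m₁ ⊔ m₂ = generateFrom
      (Set.image2 (· ∩ ·) {s | MeasurableSet[m₁] s} {t | MeasurableSet[m₂] t}) := by
  refine le_antisymm (sup_le ?_ ?_) (generateFrom_le ?_)
  · exact fun s hs ↦ measurableSet_generateFrom ⟨s, hs, Set.univ, .univ, Set.inter_univ s⟩
  · exact fun t ht ↦ measurableSet_generateFrom ⟨Set.univ, .univ, t, ht, Set.univ_inter t⟩
  · rintro _ ⟨s, hs, t, ht, rfl⟩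
    exact (le_sup_left (b := m₂) s hs).inter (le_sup_right (a := m₁) t ht)

theorem isPiSystem_image2_inter (m₁ m₂ : MeasurableSpace α) :
    IsPiSystem (Set.image2 (· ∩ ·) {s | MeasurableSet[m₁] s} {t | MeasurableSet[m₂] t}) := by
  rintro _ ⟨s₁, hs₁, t₁, ht₁, rfl⟩ _ ⟨s₂, hs₂, t₂, ht₂, rfl⟩ -
  exact ⟨s₁ ∩ s₂, hs₁.inter hs₂, t₁ ∩ t₂, ht₁.inter ht₂, Set.inter_inter_inter_comm ..⟩

end MeasurableSpace

namespace MeasureTheory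

variable {α E : Type*} [NormedAddCommGroup E] [NormedSpace ℝ E]

theorem setIntegral_eq_of_isPiSystem {m m₀ : MeasurableSpace α} {μ : Measure α}
    {C : Set (Set α)} (hm : m ≤ m₀) (hC : m = MeasurableSpace.generateFrom C)
    (hC_pi : IsPiSystem C) {f g : α → E} (hf : Integrable f μ) (hg : Integrable g μ)
    (h_univ : ∫ x, f x ∂μ = ∫ x, g x ∂μ)
    (h_basic : ∀ s ∈ C, ∫ x in s, f x ∂μ = ∫ x in s, g x ∂μ)
    {s : Set α} (hs : MeasurableSet[m] s) : ∫ x in s, f x ∂μ = ∫ x in s, g x ∂μ := by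
  induction s, hs using MeasurableSpace.induction_on_inter hC hC_pi with
  | empty => simp
  | basic s hs => exact h_basic s hs
  | compl s hs ih => rw [setIntegral_compl (hm s hs) hf, setIntegral_compl (hm s hs) hg, ih, h_univ]
  | iUnion s hdisj hs ih =>
    rw [integral_iUnion (fun i ↦ hm _ (hs i)) hdisj hf.integrableOn,
      integral_iUnion (fun i ↦ hm _ (hs i)) hdisj hg.integrableOn]
    exact tsum_congr ih

end MeasureTheory

namespace ProbabilityTheory

variable {Ω : Type*} {m' m₁ m₂ mΩ : MeasurableSpace Ω} [StandardBorelSpace Ω]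
  {hm' : m' ≤ mΩ} {μ : Measure Ω} [IsFiniteMeasure μ] {t : Set Ω}

theorem CondIndep.condExp_indicator_sup_ae_eq (h : CondIndep m' m₁ m₂ hm' μ)
    (hm₁ : m₁ ≤ mΩ) (hm₂ : m₂ ≤ mΩ) (ht : MeasurableSet[m₂] t) :
    μ⟦t | m' ⊔ m₁⟧ =ᵐ[μ] μ⟦t | m'⟧ := by
  have ht_int : Integrable (t.indicator fun _ ↦ (1 : ℝ)) μ :=
    (integrable_const 1).indicator (hm₂ t ht)
  have h_basic : ∀ s ∈ Set.image2 (· ∩ ·) {s | MeasurableSet[m'] s} {b | MeasurableSet[m₁] b},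
      ∫ ω in s, (μ⟦t | m'⟧) ω ∂μ = ∫ ω in s, t.indicator (fun _ ↦ (1 : ℝ)) ω ∂μ := by
    rintro _ ⟨a, ha, b, hb, rfl⟩
    have hb_int : Integrable (b.indicator fun _ ↦ (1 : ℝ)) μ :=
      (integrable_const 1).indicator (hm₁ b hb)
    have h_mul : (b.indicator fun _ ↦ (1 : ℝ)) * μ⟦t | m'⟧ = b.indicator (μ⟦t | m'⟧) := by
      ext ω
      by_cases hω : ω ∈ b <;> simp [hω]
    have h_pull : μ[b.indicator (μ⟦t | m'⟧) | m'] =ᵐ[μ] μ⟦b | m'⟧ * μ⟦t | m'⟧ := by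
      rw [← h_mul]
      exact condExp_mul_of_stronglyMeasurable_right stronglyMeasurable_condExp
        (h_mul ▸ integrable_condExp.indicator (hm₁ b hb)) hb_int
    calc ∫ ω in a ∩ b, (μ⟦t | m'⟧) ω ∂μ
        = ∫ ω in a, b.indicator (μ⟦t | m'⟧) ω ∂μ := (setIntegral_indicator (hm₁ b hb)).symm
      _ = ∫ ω in a, (μ[b.indicator (μ⟦t | m'⟧) | m']) ω ∂μ :=
          (setIntegral_condExp hm' (integrable_condExp.indicator (hm₁ b hb)) ha).symm
      _ = ∫ ω in a, (μ⟦b | m'⟧ * μ⟦t | m'⟧) ω ∂μ := integral_congr_ae (ae_restrict_of_ae h_pull)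
      _ = ∫ ω in a, (μ⟦b ∩ t | m'⟧) ω ∂μ := integral_congr_ae <| ae_restrict_of_ae
          ((condIndep_iff _ _ _ hm' hm₁ hm₂ μ).1 h b t hb ht).symm
      _ = ∫ ω in a ∩ b, t.indicator (fun _ ↦ (1 : ℝ)) ω ∂μ := by
          rw [setIntegral_condExp hm' ((integrable_const 1).indicator
            ((hm₁ b hb).inter (hm₂ t ht))) ha, ← Set.indicator_indicator,
            setIntegral_indicator (hm₁ b hb)]
  have hle : m' ⊔ m₁ ≤ mΩ := sup_le hm' hm₁
  refine (ae_eq_condExp_of_forall_setIntegral_eq hle ht_int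
    (fun _ _ _ ↦ integrable_condExp.integrableOn) (fun s hs _ ↦ ?_)
    (stronglyMeasurable_condExp.mono (le_sup_left : m' ≤ m' ⊔ m₁)).aestronglyMeasurable).symm
  exact setIntegral_eq_of_isPiSystem hle (MeasurableSpace.sup_eq_generateFrom_image2_inter_s8 m' m₁)
    (MeasurableSpace.isPiSystem_image2_inter m' m₁) integrable_condExp ht_int
    (integral_condExp hm') h_basic hs

theorem CondIndep.condExp_indicator_mul_ae_eq (h : CondIndep m' m₁ m₂ hm' μ)
    (hm₁ : m₁ ≤ mΩ) (hm₂ : m₂ ≤ mΩ) (ht : MeasurableSet[m₂] t) {Y : Ω → ℝ}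
    (hY : StronglyMeasurable[m₁] Y) (hY_int : Integrable Y μ) :
    μ[(t.indicator fun _ ↦ (1 : ℝ)) * Y | m'] =ᵐ[μ] μ⟦t | m'⟧ * μ[Y | m'] := by
  have hle : m' ⊔ m₁ ≤ mΩ := sup_le hm' hm₁
  have ht_int : Integrable (t.indicator fun _ ↦ (1 : ℝ)) μ :=
    (integrable_const 1).indicator (hm₂ t ht)
  have ht_bdd : ∀ᵐ ω ∂μ, |(μ⟦t | m'⟧) ω| ≤ 1 := by
    refine ae_bdd_abs_condExp_of_ae_bdd_abs (.of_forall fun ω ↦ ?_)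
    by_cases hω : ω ∈ t <;> simp [hω]
  calc μ[(t.indicator fun _ ↦ (1 : ℝ)) * Y | m']
      =ᵐ[μ] μ[μ[(t.indicator fun _ ↦ (1 : ℝ)) * Y | m' ⊔ m₁] | m'] :=
        (condExp_condExp_of_le le_sup_left hle).symm
    _ =ᵐ[μ] μ[μ⟦t | m' ⊔ m₁⟧ * Y | m'] :=
        condExp_congr_ae (condExp_mul_of_stronglyMeasurable_right (hY.mono le_sup_right)
          (hY_int.bdd_mul (c := 1) ht_int.aestronglyMeasurable (.of_forall fun ω ↦ by
            by_cases hω : ω ∈ t <;> simp [hω])) ht_int)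
    _ =ᵐ[μ] μ[μ⟦t | m'⟧ * Y | m'] :=
        condExp_congr_ae ((h.condExp_indicator_sup_ae_eq hm₁ hm₂ ht).mul .rfl)
    _ =ᵐ[μ] μ⟦t | m'⟧ * μ[Y | m'] :=
        condExp_stronglyMeasurable_mul_of_bound hm' stronglyMeasurable_condExp hY_int 1 ht_bdd

end ProbabilityTheory

theorem gcomp_identification_general
    {Ω S : Type*} [MeasurableSpace Ω] [StandardBorelSpace Ω]
    [MeasurableSpace S]
    (P : Measure Ω) [IsProbabilityMeasure P]
    (L : Ω → S) (hL : Measurable L)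
    (A : Ω → Bool) (hA : Measurable A)
    (Y Y1 : Ω → ℝ) (hY1 : Measurable Y1)
    (hY1bdd : ∃ B : ℝ, ∀ᵐ ω ∂P, |Y1 ω| ≤ B)
    -- consistency: Y = Y¹ a.s. on {A = 1}
    (hcons : ∀ᵐ ω ∂P, A ω = true → Y ω = Y1 ω)
    -- exchangeability: Y¹ ⫫ A | σ(L)
    (hexch : CondIndepFun (MeasurableSpace.comap L inferInstance) hL.comap_le Y1 A P)
    -- propensity score: e is a version of E[1_{A=1} | σ(L)]
    (e : Ω → ℝ)
    (he : e =ᵐ[P]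
      P[(fun ω => if A ω then (1 : ℝ) else 0) | MeasurableSpace.comap L inferInstance])
    -- positivity
    (η : ℝ) (hη : 0 < η) (hpos : ∀ᵐ ω ∂P, η ≤ e ω)
    -- m is (a version of) the conditional mean outcome among the treated given L
    (m : Ω → ℝ)
    (hm : (fun ω => m ω * e ω) =ᵐ[P]
      P[(fun ω => (if A ω then (1 : ℝ) else 0) * Y ω) |
        MeasurableSpace.comap L inferInstance]) :
    ∫ ω, m ω ∂P = ∫ ω, Y1 ω ∂P := by
  set mL := MeasurableSpace.comap L inferInstance
  have h_treated : (fun ω ↦ if A ω then (1 : ℝ) else 0) = (A ⁻¹' {true}).indicator fun _ ↦ 1 := by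
    ext ω
    by_cases hAω : A ω <;> simp [hAω]
  rw [h_treated] at he
  obtain ⟨B, hB⟩ := hY1bdd
  have hY1_int : Integrable Y1 P :=
    ⟨hY1.aestronglyMeasurable, .of_bounded (hB.mono fun ω h ↦ by simpa using h)⟩
  have h_factor : P[(A ⁻¹' {true}).indicator (fun _ ↦ (1 : ℝ)) * Y1 | mL] =ᵐ[P]
      P⟦A ⁻¹' {true} | mL⟧ * P[Y1 | mL] :=
    ((condIndepFun_iff_condIndep _ _ _ _ _).1 hexch).condExp_indicator_mul_ae_eq hY1.comap_le
      hA.comap_le ⟨{true}, measurableSet_singleton true, rfl⟩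
      (comap_measurable Y1).stronglyMeasurable hY1_int
  have h_consistency : (fun ω ↦ (if A ω then (1 : ℝ) else 0) * Y ω) =ᵐ[P]
      (A ⁻¹' {true}).indicator (fun _ ↦ (1 : ℝ)) * Y1 := by
    filter_upwards [hcons] with ω hω
    by_cases hAω : A ω <;> simp [hAω, hω]
  have h_me : (fun ω ↦ m ω * e ω) =ᵐ[P] fun ω ↦ P[Y1 | mL] ω * e ω := by
    filter_upwards [hm.trans ((condExp_congr_ae h_consistency).trans h_factor), he] with ω h he
    simp only [h, Pi.mul_apply, ← he, mul_comm]
  have hm_eq : m =ᵐ[P] P[Y1 | mL] := by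
    filter_upwards [h_me, hpos] with ω h hω
    exact mul_right_cancel₀ (hη.trans_le hω).ne' h
  rw [integral_congr_ae hm_eq, integral_condExp hL.comap_le]

/-- Single-time-period g-computation (outcome regression) identification: if `m` is
`σ(L)`-measurable, a.s. bounded, and satisfies `m · e = E[1_{A=1} · Y | σ(L)]` a.s.,
then `E[m] = E[Y¹]`. -/
theorem gcomp_identification
    {Ω S : Type*} [MeasurableSpace Ω] [StandardBorelSpace Ω] [Nonempty Ω]
    [MeasurableSpace S] [StandardBorelSpace S]
    (P : Measure Ω) [IsProbabilityMeasure P]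
    (L : Ω → S) (hL : Measurable L)
    (A : Ω → Bool) (hA : Measurable A)
    (Y Y1 : Ω → ℝ) (hY : Measurable Y) (hY1 : Measurable Y1)
    (hYbdd : ∃ B : ℝ, ∀ᵐ ω ∂P, |Y ω| ≤ B)
    (hY1bdd : ∃ B : ℝ, ∀ᵐ ω ∂P, |Y1 ω| ≤ B)
    -- consistency: Y = Y¹ a.s. on {A = 1}
    (hcons : ∀ᵐ ω ∂P, A ω = true → Y ω = Y1 ω)
    -- exchangeability: Y¹ ⫫ A | σ(L)
    (hexch : CondIndepFun (MeasurableSpace.comap L inferInstance) hL.comap_le Y1 A P)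
    -- propensity score: e is a version of E[1_{A=1} | σ(L)]
    (e : Ω → ℝ)
    (he : e =ᵐ[P]
      P[(fun ω => if A ω then (1 : ℝ) else 0) | MeasurableSpace.comap L inferInstance])
    -- positivity
    (η : ℝ) (hη : 0 < η) (hpos : ∀ᵐ ω ∂P, η ≤ e ω)
    -- m is (a version of) the conditional mean outcome among the treated given L
    (m : Ω → ℝ)
    (hm_meas : Measurable[MeasurableSpace.comap L inferInstance] m)
    (hm_bdd : ∃ B : ℝ, ∀ᵐ ω ∂P, |m ω| ≤ B)
    (hm : (fun ω => m ω * e ω) =ᵐ[P]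
      P[(fun ω => (if A ω then (1 : ℝ) else 0) * Y ω) |
        MeasurableSpace.comap L inferInstance]) :
    ∫ ω, m ω ∂P = ∫ ω, Y1 ω ∂P :=
  gcomp_identification_general P L hL A hA Y Y1 hY1 hY1bdd hcons hexch e he η hη hpos m hm
end

section
/- In the two-period longitudinal causal setup, the longitudinal inverse probability weighting identification holds: E[1_{A₀=1} · 1_{A₁=1} · Y / (g₀ · g₁)] = E[Y¹¹]. -/
/-!
Consistency replaces `Y` by `Y¹¹` on `{A₀ = A₁ = 1}`. Conditionally on `σ(L₀, A₀, L₁)`,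
exchangeability factorises `E[Y¹¹ 1_{A₁=1} | ·] = E[Y¹¹ | ·] · g₁`, so the weight `1 / g₁` cancels
and `A₁` disappears; conditioning on `σ(L₀)` then removes `A₀` and `1 / g₀` in the same way.
The factorisation comes from the regular conditional distribution: conditional independence
makes the two variables independent under almost every conditional measure, which it suffices
to check on the countable π-system of rational half-lines.
-/

open MeasureTheory ProbabilityTheory Set MeasurableSpace

theorem ProbabilityTheory.Kernel.IndepFun.ae_indepFun {α Ω : Type*} {mα : MeasurableSpace α}
    {mΩ : MeasurableSpace Ω} {κ : Kernel α Ω} [IsMarkovKernel κ] {μ : Measure α}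
    {f g : Ω → ℝ} (hf : Measurable f) (hg : Measurable g) (h : Kernel.IndepFun f g κ μ) :
    ∀ᵐ a ∂μ, ProbabilityTheory.IndepFun f g (κ a) := by
  have h_rat : ∀ᵐ a ∂μ, ∀ q r : ℚ, κ a (f ⁻¹' Iic (q : ℝ) ∩ g ⁻¹' Iic (r : ℝ))
      = κ a (f ⁻¹' Iic (q : ℝ)) * κ a (g ⁻¹' Iic (r : ℝ)) := by
    simp only [ae_all_iff]
    exact fun q r ↦ h.measure_inter_preimage_eq_mul _ _ measurableSet_Iic measurableSet_Iic
  have h_comap (φ : Ω → ℝ) :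
      MeasurableSpace.comap φ inferInstance
        = generateFrom (preimage φ '' ⋃ q : ℚ, {Iic (q : ℝ)}) := by
    rw [← comap_generateFrom, ← Real.borel_eq_generateFrom_Iic_rat,
      BorelSpace.measurable_eq (α := ℝ)]
  filter_upwards [h_rat] with a ha
  rw [ProbabilityTheory.IndepFun_iff_Indep]
  refine ProbabilityTheory.IndepSets.indep hf.comap_le hg.comap_le
    (Real.isPiSystem_Iic_rat.comap f) (Real.isPiSystem_Iic_rat.comap g) (h_comap f) (h_comap g) ?_
  rw [ProbabilityTheory.IndepSets_iff]
  rintro _ _ ⟨_, ⟨_, ⟨q, rfl⟩, rfl⟩, rfl⟩ ⟨_, ⟨_, ⟨r, rfl⟩, rfl⟩, rfl⟩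
  exact ha q r

section

variable {Ω : Type*} {m m₀ m₁ mΩ : MeasurableSpace Ω} {μ : Measure Ω} [IsFiniteMeasure μ]

theorem integral_stronglyMeasurable_mul_condExp_of_bound (hm : m ≤ mΩ) {W X : Ω → ℝ}
    (hW : StronglyMeasurable[m] W) {D : ℝ} (hWD : ∀ᵐ ω ∂μ, |W ω| ≤ D) (hX : Integrable X μ) :
    ∫ ω, W ω * (μ[X | m]) ω ∂μ = ∫ ω, W ω * X ω ∂μ := by
  rw [← integral_condExp hm (f := fun ω ↦ W ω * X ω)]
  exact integral_congr_ae (condExp_stronglyMeasurable_mul_of_bound hm hW hX D hWD).symm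

variable [StandardBorelSpace Ω] {hm : m ≤ mΩ}

theorem ProbabilityTheory.CondIndepFun.condExp_mul {f g : Ω → ℝ} (h : CondIndepFun m hm f g μ)
    (hf : Measurable f) (hg : Measurable g) (hfi : Integrable f μ) (hgi : Integrable g μ)
    (hfgi : Integrable (f * g) μ) : μ[f * g | m] =ᵐ[μ] μ[f | m] * μ[g | m] := by
  have h_indep : ∀ᵐ ω ∂μ, IndepFun f g (condExpKernel μ m ω) :=
    ae_of_ae_trim hm (Kernel.IndepFun.ae_indepFun hf hg h)
  filter_upwards [condExp_ae_eq_integral_condExpKernel hm hfgi,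
    condExp_ae_eq_integral_condExpKernel hm hfi, condExp_ae_eq_integral_condExpKernel hm hgi,
    h_indep] with ω hfg_eq hf_eq hg_eq hω
  rw [Pi.mul_apply, hfg_eq, hf_eq, hg_eq]
  exact hω.integral_mul_eq_mul_integral hf.aestronglyMeasurable hg.aestronglyMeasurable

theorem integral_mul_mul_div_condExp_of_condIndepFun {Z I W : Ω → ℝ}
    (h : CondIndepFun m hm Z I μ) (hZ : Measurable Z) (hZi : Integrable Z μ) (hI : Measurable I)
    {C : ℝ} (hIC : ∀ᵐ ω ∂μ, |I ω| ≤ C) (hW : StronglyMeasurable[m] W) {D : ℝ}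
    (hWD : ∀ᵐ ω ∂μ, |W ω| ≤ D) {η : ℝ} (hη : 0 < η) (hpos : ∀ᵐ ω ∂μ, η ≤ μ[I | m] ω) :
    ∫ ω, W ω * I ω * Z ω / μ[I | m] ω ∂μ = ∫ ω, W ω * Z ω ∂μ := by
  have hIi : Integrable I μ := .of_bound hI.aestronglyMeasurable C hIC
  have hZIi : Integrable (Z * I) μ := hZi.mul_bdd hI.aestronglyMeasurable hIC
  have hWG : StronglyMeasurable[m] (fun ω ↦ W ω / μ[I | m] ω) :=
    (hW.measurable.div stronglyMeasurable_condExp.measurable).stronglyMeasurable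
  have hWGD : ∀ᵐ ω ∂μ, |W ω / μ[I | m] ω| ≤ D / η := by
    filter_upwards [hWD, hpos] with ω hWω hω
    rw [abs_div, abs_of_pos (hη.trans_le hω)]
    exact div_le_div₀ ((abs_nonneg _).trans hWω) hWω hη hω
  calc ∫ ω, W ω * I ω * Z ω / μ[I | m] ω ∂μ
      = ∫ ω, W ω / μ[I | m] ω * (Z * I) ω ∂μ := by
        refine integral_congr_ae (ae_of_all _ fun ω ↦ ?_)
        simp only [Pi.mul_apply]; ring
    _ = ∫ ω, W ω / μ[I | m] ω * (μ[Z | m] ω * μ[I | m] ω) ∂μ := by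
        rw [← integral_stronglyMeasurable_mul_condExp_of_bound hm hWG hWGD hZIi]
        refine integral_congr_ae ?_
        filter_upwards [h.condExp_mul hZ hI hZi hIi hZIi] with ω hω
        rw [hω, Pi.mul_apply]
    _ = ∫ ω, W ω * μ[Z | m] ω ∂μ := by
        refine integral_congr_ae ?_
        filter_upwards [hpos] with ω hω
        field_simp [(hη.trans_le hω).ne']
    _ = ∫ ω, W ω * Z ω ∂μ := integral_stronglyMeasurable_mul_condExp_of_bound hm hW hWD hZi

theorem integral_mul_mul_div_mul_condExp_of_condIndepFun (hm₀₁ : m₀ ≤ m₁) (hm₁ : m₁ ≤ mΩ)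
    {Z I₀ I₁ : Ω → ℝ}
    (h₀ : CondIndepFun m₀ (hm₀₁.trans hm₁) Z I₀ μ) (h₁ : CondIndepFun m₁ hm₁ Z I₁ μ)
    (hZ : Measurable Z) (hZi : Integrable Z μ) (hI₀ : StronglyMeasurable[m₁] I₀)
    (hI₁ : Measurable I₁) {C : ℝ} (hI₀C : ∀ᵐ ω ∂μ, |I₀ ω| ≤ C) (hI₁C : ∀ᵐ ω ∂μ, |I₁ ω| ≤ C)
    {η : ℝ} (hη : 0 < η) (hpos₀ : ∀ᵐ ω ∂μ, η ≤ μ[I₀ | m₀] ω)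
    (hpos₁ : ∀ᵐ ω ∂μ, η ≤ μ[I₁ | m₁] ω) :
    ∫ ω, I₀ ω * I₁ ω * Z ω / (μ[I₀ | m₀] ω * μ[I₁ | m₁] ω) ∂μ = ∫ ω, Z ω ∂μ := by
  have hW : StronglyMeasurable[m₁] (fun ω ↦ I₀ ω / μ[I₀ | m₀] ω) :=
    (hI₀.measurable.div (stronglyMeasurable_condExp.mono hm₀₁).measurable).stronglyMeasurable
  have hWC : ∀ᵐ ω ∂μ, |I₀ ω / μ[I₀ | m₀] ω| ≤ C / η := by
    filter_upwards [hI₀C, hpos₀] with ω hI₀ω hω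
    rw [abs_div, abs_of_pos (hη.trans_le hω)]
    exact div_le_div₀ ((abs_nonneg _).trans hI₀ω) hI₀ω hη hω
  calc ∫ ω, I₀ ω * I₁ ω * Z ω / (μ[I₀ | m₀] ω * μ[I₁ | m₁] ω) ∂μ
      = ∫ ω, I₀ ω / μ[I₀ | m₀] ω * I₁ ω * Z ω / μ[I₁ | m₁] ω ∂μ := by
        congr 1 with ω; ring
    _ = ∫ ω, 1 * I₀ ω * Z ω / μ[I₀ | m₀] ω ∂μ := by
        rw [integral_mul_mul_div_condExp_of_condIndepFun h₁ hZ hZi hI₁ hI₁C hW hWC hη hpos₁]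
        congr 1 with ω; ring
    _ = ∫ ω, Z ω ∂μ := by
        rw [integral_mul_mul_div_condExp_of_condIndepFun h₀ hZ hZi
          (hI₀.measurable.mono hm₁ le_rfl) hI₀C stronglyMeasurable_const
          (ae_of_all _ fun _ ↦ le_refl |1|) hη hpos₀]
        simp

end

theorem abs_ite_one_zero_le_one (p : Prop) [Decidable p] : |(if p then (1 : ℝ) else 0)| ≤ 1 := by
  split_ifs <;> simp

theorem longitudinal_ipw_identification_general
    {Ω S₀ S₁ : Type*} [MeasurableSpace Ω] [StandardBorelSpace Ω]
    [MeasurableSpace S₀]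
    [MeasurableSpace S₁]
    (P : Measure Ω) [IsProbabilityMeasure P]
    (L0 : Ω → S₀) (hL0 : Measurable L0)
    (A0 : Ω → Bool) (hA0 : Measurable A0)
    (L1 : Ω → S₁) (hL1 : Measurable L1)
    (A1 : Ω → Bool) (hA1 : Measurable A1)
    (Y : Ω → ℝ)
    -- potential covariate at time 1 under treatment at time 0,
    -- and potential outcome under treatment at both times
    (L1p : Ω → S₁)
    (Y11 : Ω → ℝ) (hY11 : Measurable Y11)
    (hY11bdd : ∃ B : ℝ, ∀ᵐ ω ∂P, |Y11 ω| ≤ B)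
    -- consistency
    (hconsY : ∀ᵐ ω ∂P, A0 ω = true → A1 ω = true → Y ω = Y11 ω)
    -- sequential exchangeability: (L₁¹, Y¹¹) ⫫ A₀ | σ(L₀) and Y¹¹ ⫫ A₁ | σ(L₀, A₀, L₁)
    (hexch0 : CondIndepFun (MeasurableSpace.comap L0 inferInstance) hL0.comap_le
      (fun ω => (L1p ω, Y11 ω)) A0 P)
    (hexch1 : CondIndepFun
      (MeasurableSpace.comap (fun ω => (L0 ω, A0 ω, L1 ω)) inferInstance)
      (hL0.prodMk (hA0.prodMk hL1)).comap_le Y11 A1 P)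
    -- propensities: g₀ is a version of E[1_{A₀=1} | σ(L₀)],
    -- g₁ a version of E[1_{A₁=1} | σ(L₀, A₀, L₁)]
    (g0 g1 : Ω → ℝ)
    (hg0 : g0 =ᵐ[P]
      P[(fun ω => if A0 ω then (1 : ℝ) else 0) | MeasurableSpace.comap L0 inferInstance])
    (hg1 : g1 =ᵐ[P]
      P[(fun ω => if A1 ω then (1 : ℝ) else 0) |
        MeasurableSpace.comap (fun ω => (L0 ω, A0 ω, L1 ω)) inferInstance])
    -- positivity
    (η : ℝ) (hη : 0 < η) (hpos0 : ∀ᵐ ω ∂P, η ≤ g0 ω) (hpos1 : ∀ᵐ ω ∂P, η ≤ g1 ω) :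
    ∫ ω, (if A0 ω then (1 : ℝ) else 0) * (if A1 ω then (1 : ℝ) else 0) * Y ω
        / (g0 ω * g1 ω) ∂P = ∫ ω, Y11 ω ∂P := by
  have hI : Measurable fun b : Bool ↦ if b then (1 : ℝ) else 0 := measurable_of_countable _
  have hT : Measurable[MeasurableSpace.comap (fun ω ↦ (L0 ω, A0 ω, L1 ω)) inferInstance]
      (fun ω ↦ (L0 ω, A0 ω, L1 ω)) := Measurable.of_comap_le le_rfl
  have hm₀₁ : MeasurableSpace.comap L0 inferInstance
      ≤ MeasurableSpace.comap (fun ω ↦ (L0 ω, A0 ω, L1 ω)) inferInstance :=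
    (measurable_fst.comp hT).comap_le
  have hI₀ : Measurable[MeasurableSpace.comap (fun ω ↦ (L0 ω, A0 ω, L1 ω)) inferInstance]
      (fun ω ↦ if A0 ω then (1 : ℝ) else 0) :=
    hI.comp ((measurable_fst.comp measurable_snd).comp hT)
  obtain ⟨B, hB⟩ := hY11bdd
  refine (integral_congr_ae ?_).trans (integral_mul_mul_div_mul_condExp_of_condIndepFun
    (Z := Y11) (I₀ := fun ω ↦ if A0 ω then 1 else 0) (I₁ := fun ω ↦ if A1 ω then 1 else 0)
    hm₀₁ (hL0.prodMk (hA0.prodMk hL1)).comap_le (hexch0.comp measurable_snd hI)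
    (hexch1.comp measurable_id hI) hY11 (.of_bound hY11.aestronglyMeasurable B hB)
    hI₀.stronglyMeasurable (hI.comp hA1) (ae_of_all _ fun _ ↦ abs_ite_one_zero_le_one _)
    (ae_of_all _ fun _ ↦ abs_ite_one_zero_le_one _) hη (hg0.rw (fun _ x ↦ η ≤ x) hpos0)
    (hg1.rw (fun _ x ↦ η ≤ x) hpos1))
  filter_upwards [hg0, hg1, hconsY] with ω h₀ h₁ hcons
  rw [h₀, h₁]
  by_cases hA₀ : A0 ω <;> by_cases hA₁ : A1 ω <;> simp [hA₀, hA₁, hcons]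

/-- Two-period longitudinal inverse probability weighting identification:
`E[1_{A₀=1} · 1_{A₁=1} · Y / (g₀ · g₁)] = E[Y¹¹]`. -/
theorem longitudinal_ipw_identification
    {Ω S₀ S₁ : Type*} [MeasurableSpace Ω] [StandardBorelSpace Ω] [Nonempty Ω]
    [MeasurableSpace S₀] [StandardBorelSpace S₀]
    [MeasurableSpace S₁] [StandardBorelSpace S₁]
    (P : Measure Ω) [IsProbabilityMeasure P]
    (L0 : Ω → S₀) (hL0 : Measurable L0)
    (A0 : Ω → Bool) (hA0 : Measurable A0)
    (L1 : Ω → S₁) (hL1 : Measurable L1)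
    (A1 : Ω → Bool) (hA1 : Measurable A1)
    (Y : Ω → ℝ) (hY : Measurable Y)
    -- potential covariate at time 1 under treatment at time 0,
    -- and potential outcome under treatment at both times
    (L1p : Ω → S₁) (hL1p : Measurable L1p)
    (Y11 : Ω → ℝ) (hY11 : Measurable Y11)
    (hYbdd : ∃ B : ℝ, ∀ᵐ ω ∂P, |Y ω| ≤ B)
    (hY11bdd : ∃ B : ℝ, ∀ᵐ ω ∂P, |Y11 ω| ≤ B)
    -- consistency
    (hconsL : ∀ᵐ ω ∂P, A0 ω = true → L1 ω = L1p ω)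
    (hconsY : ∀ᵐ ω ∂P, A0 ω = true → A1 ω = true → Y ω = Y11 ω)
    -- sequential exchangeability: (L₁¹, Y¹¹) ⫫ A₀ | σ(L₀) and Y¹¹ ⫫ A₁ | σ(L₀, A₀, L₁)
    (hexch0 : CondIndepFun (MeasurableSpace.comap L0 inferInstance) hL0.comap_le
      (fun ω => (L1p ω, Y11 ω)) A0 P)
    (hexch1 : CondIndepFun
      (MeasurableSpace.comap (fun ω => (L0 ω, A0 ω, L1 ω)) inferInstance)
      (hL0.prodMk (hA0.prodMk hL1)).comap_le Y11 A1 P)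
    -- propensities: g₀ is a version of E[1_{A₀=1} | σ(L₀)],
    -- g₁ a version of E[1_{A₁=1} | σ(L₀, A₀, L₁)]
    (g0 g1 : Ω → ℝ)
    (hg0 : g0 =ᵐ[P]
      P[(fun ω => if A0 ω then (1 : ℝ) else 0) | MeasurableSpace.comap L0 inferInstance])
    (hg1 : g1 =ᵐ[P]
      P[(fun ω => if A1 ω then (1 : ℝ) else 0) |
        MeasurableSpace.comap (fun ω => (L0 ω, A0 ω, L1 ω)) inferInstance])
    -- positivity
    (η : ℝ) (hη : 0 < η) (hpos0 : ∀ᵐ ω ∂P, η ≤ g0 ω) (hpos1 : ∀ᵐ ω ∂P, η ≤ g1 ω) :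
    ∫ ω, (if A0 ω then (1 : ℝ) else 0) * (if A1 ω then (1 : ℝ) else 0) * Y ω
        / (g0 ω * g1 ω) ∂P = ∫ ω, Y11 ω ∂P :=
  longitudinal_ipw_identification_general P L0 hL0 A0 hA0 L1 hL1 A1 hA1 Y L1p Y11 hY11 hY11bdd
    hconsY hexch0 hexch1 g0 g1 hg0 hg1 η hη hpos0 hpos1
end

section
/- In the two-period longitudinal causal setup, the iterated conditional expectation (g-computation) identification holds: if Q₂ : Ω → ℝ is σ(L₀, A₀, L₁)-measurable, P-almost surely bounded, and satisfies Q₂ · g₁ = E[1_{A₁=1} · Y | σ(L₀, A₀, L₁)] P-almost surely, and Q₁ : Ω → ℝ is σ(L₀)-measurable, P-almost surely bounded, and satisfies Q₁ · g₀ = E[1_{A₀=1} · Q₂ | σ(L₀)] P-almost surely, then E[Q₁] = E[Y¹¹]. -/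
/-!
If `f` and `g` are conditionally independent given `m`, then for a.e. `ω` they are independent
under the regular conditional probability `condExpKernel μ m ω`, and integrating there gives
`E[f g | m] = E[f | m] E[g | m]`. For a treatment indicator `a` with propensity
`g = E[a | m] ≠ 0` this turns `Q g = E[a X | m]` into `Q = E[X | m]`.
At time 1, consistency replaces `Y` by `Y¹¹` on `{A₀ = 1}`, so that
`1_{A₀} Q₂ = 1_{A₀} E[Y¹¹ | L₀, A₀, L₁]`; at time 0 the tower property then gives
`E[1_{A₀} Q₂ | L₀] = E[1_{A₀} Y¹¹ | L₀]`, hence `Q₁ = E[Y¹¹ | L₀]` and `E[Q₁] = E[Y¹¹]`.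
-/

open MeasureTheory ProbabilityTheory

theorem integrable_of_ae_abs_le {α : Type*} {mα : MeasurableSpace α} {μ : Measure α}
    [IsFiniteMeasure μ] {f : α → ℝ} (hf : AEStronglyMeasurable f μ)
    (hbdd : ∃ B : ℝ, ∀ᵐ x ∂μ, |f x| ≤ B) : Integrable f μ := by
  obtain ⟨B, hB⟩ := hbdd
  exact Integrable.of_bound hf B (by simpa only [Real.norm_eq_abs] using hB)

theorem ae_eq_of_mul_ae_eq_mul_right {α M : Type*} {mα : MeasurableSpace α} {μ : Measure α}
    [MulZeroClass M] [IsRightCancelMulZero M] {a b g : α → M} (hg : ∀ᵐ x ∂μ, g x ≠ 0)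
    (h : a * g =ᵐ[μ] b * g) : a =ᵐ[μ] b := by
  filter_upwards [hg, h] with x hgx hx
  exact mul_right_cancel₀ hgx hx

namespace ProbabilityTheory

variable {Ω : Type*} {m mΩ : MeasurableSpace Ω} {μ : Measure Ω}

theorem mul_condExp_ae_eq_of_mul_ae_eq {a f f' : Ω → ℝ} (ha : StronglyMeasurable[m] a)
    (hf : Integrable f μ) (hf' : Integrable f' μ) (haf : Integrable (a * f) μ)
    (h : a * f =ᵐ[μ] a * f') : a * μ[f | m] =ᵐ[μ] a * μ[f' | m] :=
  (condExp_mul_of_stronglyMeasurable_left ha haf hf).symm.trans <|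
    (condExp_congr_ae h).trans (condExp_mul_of_stronglyMeasurable_left ha (haf.congr h) hf')

theorem condExp_mul_condExp_of_le {m₀ m₁ : MeasurableSpace Ω} (hm₀₁ : m₀ ≤ m₁)
    (hm₁ : m₁ ≤ mΩ) [SigmaFinite (μ.trim hm₁)] {a X : Ω → ℝ} (ha : StronglyMeasurable[m₁] a)
    (hX : Integrable X μ) (haX : Integrable (a * X) μ) :
    μ[a * μ[X | m₁] | m₀] =ᵐ[μ] μ[a * X | m₀] :=
  (condExp_congr_ae (condExp_mul_of_stronglyMeasurable_left ha haX hX).symm).trans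
    (condExp_condExp_of_le hm₀₁ hm₁)

variable [StandardBorelSpace Ω] [IsFiniteMeasure μ]

theorem CondIndepFun.ae_indepFun_condExpKernel {hm : m ≤ mΩ} {β γ : Type*} [MeasurableSpace β]
    [MeasurableSpace γ] [MeasurableSpace.CountableOrCountablyGenerated Ω (β × γ)]
    {f : Ω → β} {g : Ω → γ} (hf : Measurable f) (hg : Measurable g)
    (hfg : CondIndepFun m hm f g μ) :
    ∀ᵐ ω ∂μ, IndepFun f g (condExpKernel μ m ω) := by
  refine ae_of_ae_trim hm ?_
  filter_upwards [(condIndepFun_iff_map_prod_eq_prod_map_map hf hg).mp hfg] with ω hω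
  rw [indepFun_iff_map_prod_eq_prod_map_map hf.aemeasurable hg.aemeasurable]
  simpa [Kernel.map_apply _ hf, Kernel.map_apply _ hg, Kernel.map_apply _ (hf.prodMk hg),
    Kernel.prod_apply] using hω

theorem CondIndepFun.condExp_mul_s11 {hm : m ≤ mΩ} {f g : Ω → ℝ} (hf : Measurable f)
    (hg : Measurable g) (hfg : CondIndepFun m hm f g μ) (hf_int : Integrable f μ)
    (hg_int : Integrable g μ) (hfg_int : Integrable (f * g) μ) :
    μ[f * g | m] =ᵐ[μ] μ[f | m] * μ[g | m] := by
  filter_upwards [condExp_ae_eq_integral_condExpKernel hm hfg_int,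
    condExp_ae_eq_integral_condExpKernel hm hf_int, condExp_ae_eq_integral_condExpKernel hm hg_int,
    hfg.ae_indepFun_condExpKernel hf hg] with ω hfg_ω hf_ω hg_ω hindep
  rw [hfg_ω, Pi.mul_apply, hf_ω, hg_ω]
  exact hindep.integral_mul_eq_mul_integral hf.aestronglyMeasurable hg.aestronglyMeasurable

variable {hm : m ≤ mΩ} {a g X : Ω → ℝ} {C : ℝ}

theorem condExp_mul_ae_eq_propensity_mul (ha : Measurable a)
    (ha_bdd : ∀ᵐ ω ∂μ, ‖a ω‖ ≤ C) (hX : Measurable X) (hX_int : Integrable X μ)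
    (hind : CondIndepFun m hm a X μ) (hg : g =ᵐ[μ] μ[a | m]) :
    μ[a * X | m] =ᵐ[μ] g * μ[X | m] :=
  (hind.condExp_mul_s11 ha hX (.of_bound ha.aestronglyMeasurable C ha_bdd) hX_int
    (hX_int.bdd_mul ha.aestronglyMeasurable ha_bdd)).trans (hg.symm.mul .rfl)

theorem mul_ae_eq_mul_condExp_of_mul_propensity_ae_eq {a' Y Q : Ω → ℝ} {C' : ℝ}
    (ha' : StronglyMeasurable[m] a') (ha'_bdd : ∀ᵐ ω ∂μ, ‖a' ω‖ ≤ C')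
    (ha : Measurable a) (ha_bdd : ∀ᵐ ω ∂μ, ‖a ω‖ ≤ C)
    (hX : Measurable X) (hX_int : Integrable X μ) (hY_int : Integrable Y μ)
    (hind : CondIndepFun m hm a X μ) (hcons : a' * (a * Y) =ᵐ[μ] a' * (a * X))
    (hg : g =ᵐ[μ] μ[a | m]) (hg_ne : ∀ᵐ ω ∂μ, g ω ≠ 0)
    (hQ : Q * g =ᵐ[μ] μ[a * Y | m]) :
    a' * Q =ᵐ[μ] a' * μ[X | m] := by
  have haY_int : Integrable (a * Y) μ := hY_int.bdd_mul ha.aestronglyMeasurable ha_bdd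
  have haX_int : Integrable (a * X) μ := hX_int.bdd_mul ha.aestronglyMeasurable ha_bdd
  refine ae_eq_of_mul_ae_eq_mul_right hg_ne ?_
  calc a' * Q * g = a' * (Q * g) := mul_assoc _ _ _
    _ =ᵐ[μ] a' * μ[a * Y | m] := hQ.mul_left
    _ =ᵐ[μ] a' * μ[a * X | m] := mul_condExp_ae_eq_of_mul_ae_eq ha' haY_int haX_int
        (haY_int.bdd_mul (ha'.mono hm).aestronglyMeasurable ha'_bdd) hcons
    _ =ᵐ[μ] a' * (g * μ[X | m]) :=
        (condExp_mul_ae_eq_propensity_mul ha ha_bdd hX hX_int hind hg).mul_left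
    _ = a' * μ[X | m] * g := by ring

theorem ae_eq_condExp_of_mul_propensity_ae_eq {m₁ : MeasurableSpace Ω} (hm₁ : m ≤ m₁)
    (hm₁Ω : m₁ ≤ mΩ) {Q Q' : Ω → ℝ} (ha : StronglyMeasurable[m₁] a)
    (ha_bdd : ∀ᵐ ω ∂μ, ‖a ω‖ ≤ C) (hX : Measurable[mΩ] X) (hX_int : Integrable X μ)
    (hind : CondIndepFun m hm a X μ) (hg : g =ᵐ[μ] μ[a | m]) (hg_ne : ∀ᵐ ω ∂μ, g ω ≠ 0)
    (hQ' : a * Q' =ᵐ[μ] a * μ[X | m₁]) (hQ : Q * g =ᵐ[μ] μ[a * Q' | m]) :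
    Q =ᵐ[μ] μ[X | m] := by
  have ha_meas : Measurable[mΩ] a := (ha.mono hm₁Ω).measurable
  refine ae_eq_of_mul_ae_eq_mul_right hg_ne ?_
  calc Q * g =ᵐ[μ] μ[a * Q' | m] := hQ
    _ =ᵐ[μ] μ[a * μ[X | m₁] | m] := condExp_congr_ae hQ'
    _ =ᵐ[μ] μ[a * X | m] := condExp_mul_condExp_of_le hm₁ hm₁Ω ha hX_int
        (hX_int.bdd_mul ha_meas.aestronglyMeasurable ha_bdd)
    _ =ᵐ[μ] g * μ[X | m] := condExp_mul_ae_eq_propensity_mul ha_meas ha_bdd hX hX_int hind hg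
    _ = μ[X | m] * g := mul_comm _ _

end ProbabilityTheory

theorem longitudinal_gcomp_identification_general
    {Ω S₀ S₁ : Type*} [MeasurableSpace Ω] [StandardBorelSpace Ω]
    [MeasurableSpace S₀]
    [MeasurableSpace S₁]
    (P : Measure Ω) [IsProbabilityMeasure P]
    (L0 : Ω → S₀) (hL0 : Measurable L0)
    (A0 : Ω → Bool) (hA0 : Measurable A0)
    (L1 : Ω → S₁) (hL1 : Measurable L1)
    (A1 : Ω → Bool) (hA1 : Measurable A1)
    (Y : Ω → ℝ) (hY : Measurable Y)
    (L1p : Ω → S₁)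
    (Y11 : Ω → ℝ) (hY11 : Measurable Y11)
    (hYbdd : ∃ B : ℝ, ∀ᵐ ω ∂P, |Y ω| ≤ B)
    (hY11bdd : ∃ B : ℝ, ∀ᵐ ω ∂P, |Y11 ω| ≤ B)
    -- consistency
    (hconsY : ∀ᵐ ω ∂P, A0 ω = true → A1 ω = true → Y ω = Y11 ω)
    -- sequential exchangeability: (L₁¹, Y¹¹) ⫫ A₀ | σ(L₀) and Y¹¹ ⫫ A₁ | σ(L₀, A₀, L₁)
    (hexch0 : CondIndepFun (MeasurableSpace.comap L0 inferInstance) hL0.comap_le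
      (fun ω => (L1p ω, Y11 ω)) A0 P)
    (hexch1 : CondIndepFun
      (MeasurableSpace.comap (fun ω => (L0 ω, A0 ω, L1 ω)) inferInstance)
      (hL0.prodMk (hA0.prodMk hL1)).comap_le Y11 A1 P)
    -- propensities
    (g0 g1 : Ω → ℝ)
    (hg0 : g0 =ᵐ[P]
      P[(fun ω => if A0 ω then (1 : ℝ) else 0) | MeasurableSpace.comap L0 inferInstance])
    (hg1 : g1 =ᵐ[P]
      P[(fun ω => if A1 ω then (1 : ℝ) else 0) |
        MeasurableSpace.comap (fun ω => (L0 ω, A0 ω, L1 ω)) inferInstance])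
    -- positivity
    (η : ℝ) (hη : 0 < η) (hpos0 : ∀ᵐ ω ∂P, η ≤ g0 ω) (hpos1 : ∀ᵐ ω ∂P, η ≤ g1 ω)
    -- iterated conditional mean outcomes
    (Q2 : Ω → ℝ)
    (hQ2 : (fun ω => Q2 ω * g1 ω) =ᵐ[P]
      P[(fun ω => (if A1 ω then (1 : ℝ) else 0) * Y ω) |
        MeasurableSpace.comap (fun ω => (L0 ω, A0 ω, L1 ω)) inferInstance])
    (Q1 : Ω → ℝ)
    (hQ1 : (fun ω => Q1 ω * g0 ω) =ᵐ[P]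
      P[(fun ω => (if A0 ω then (1 : ℝ) else 0) * Q2 ω) |
        MeasurableSpace.comap L0 inferInstance]) :
    ∫ ω, Q1 ω ∂P = ∫ ω, Y11 ω ∂P := by
  set m₀ : MeasurableSpace Ω := MeasurableSpace.comap L0 inferInstance
  set m₁ : MeasurableSpace Ω :=
    MeasurableSpace.comap (fun ω => (L0 ω, A0 ω, L1 ω)) inferInstance
  set a₀ : Ω → ℝ := fun ω => if A0 ω then 1 else 0
  set a₁ : Ω → ℝ := fun ω => if A1 ω then 1 else 0
  have hm₀₁ : m₀ ≤ m₁ :=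
    Measurable.comap_le (f := L0) (measurable_fst.comp (comap_measurable _))
  have hm₁ : m₁ ≤ _ := (hL0.prodMk (hA0.prodMk hL1)).comap_le
  have hite : Measurable fun b : Bool => if b then (1 : ℝ) else 0 := measurable_of_countable _
  have ha₀ : StronglyMeasurable[m₁] a₀ :=
    (hite.comp ((measurable_fst.comp measurable_snd).comp (comap_measurable _))).stronglyMeasurable
  have hite_bdd (A : Ω → Bool) : ∀ᵐ ω ∂P, ‖if A ω then (1 : ℝ) else 0‖ ≤ 1 :=
    .of_forall fun ω => by cases A ω <;> simp
  have hY11_int := integrable_of_ae_abs_le hY11.aestronglyMeasurable hY11bdd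
  have hg_ne {g : Ω → ℝ} (hpos : ∀ᵐ ω ∂P, η ≤ g ω) : ∀ᵐ ω ∂P, g ω ≠ 0 :=
    hpos.mono fun ω hω => (hη.trans_le hω).ne'
  have hcons : a₀ * (a₁ * Y) =ᵐ[P] a₀ * (a₁ * Y11) := by
    filter_upwards [hconsY] with ω hω
    cases h0 : A0 ω <;> cases h1 : A1 ω <;> simp [a₀, a₁, h0, h1, hω]
  have hQ₂ : a₀ * Q2 =ᵐ[P] a₀ * P[Y11 | m₁] :=
    mul_ae_eq_mul_condExp_of_mul_propensity_ae_eq ha₀ (hite_bdd A0) (hite.comp hA1) (hite_bdd A1)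
      hY11 hY11_int (integrable_of_ae_abs_le hY.aestronglyMeasurable hYbdd)
      (hexch1.symm.comp hite measurable_id) hcons hg1 (hg_ne hpos1) hQ2
  have hQ₁ : Q1 =ᵐ[P] P[Y11 | m₀] :=
    ae_eq_condExp_of_mul_propensity_ae_eq hm₀₁ hm₁ ha₀ (hite_bdd A0) hY11 hY11_int
      (hexch0.comp measurable_snd hite).symm hg0 (hg_ne hpos0) hQ₂ hQ1
  rw [integral_congr_ae hQ₁, integral_condExp hL0.comap_le]

/-- Two-period iterated conditional expectation (g-computation) identification:
if `Q₂` is `σ(L₀, A₀, L₁)`-measurable with `Q₂ · g₁ = E[1_{A₁=1} · Y | σ(L₀, A₀, L₁)]` a.s.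
and `Q₁` is `σ(L₀)`-measurable with `Q₁ · g₀ = E[1_{A₀=1} · Q₂ | σ(L₀)]` a.s., then
`E[Q₁] = E[Y¹¹]`. -/
theorem longitudinal_gcomp_identification
    {Ω S₀ S₁ : Type*} [MeasurableSpace Ω] [StandardBorelSpace Ω] [Nonempty Ω]
    [MeasurableSpace S₀] [StandardBorelSpace S₀]
    [MeasurableSpace S₁] [StandardBorelSpace S₁]
    (P : Measure Ω) [IsProbabilityMeasure P]
    (L0 : Ω → S₀) (hL0 : Measurable L0)
    (A0 : Ω → Bool) (hA0 : Measurable A0)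
    (L1 : Ω → S₁) (hL1 : Measurable L1)
    (A1 : Ω → Bool) (hA1 : Measurable A1)
    (Y : Ω → ℝ) (hY : Measurable Y)
    (L1p : Ω → S₁) (hL1p : Measurable L1p)
    (Y11 : Ω → ℝ) (hY11 : Measurable Y11)
    (hYbdd : ∃ B : ℝ, ∀ᵐ ω ∂P, |Y ω| ≤ B)
    (hY11bdd : ∃ B : ℝ, ∀ᵐ ω ∂P, |Y11 ω| ≤ B)
    -- consistency
    (hconsL : ∀ᵐ ω ∂P, A0 ω = true → L1 ω = L1p ω)
    (hconsY : ∀ᵐ ω ∂P, A0 ω = true → A1 ω = true → Y ω = Y11 ω)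
    -- sequential exchangeability: (L₁¹, Y¹¹) ⫫ A₀ | σ(L₀) and Y¹¹ ⫫ A₁ | σ(L₀, A₀, L₁)
    (hexch0 : CondIndepFun (MeasurableSpace.comap L0 inferInstance) hL0.comap_le
      (fun ω => (L1p ω, Y11 ω)) A0 P)
    (hexch1 : CondIndepFun
      (MeasurableSpace.comap (fun ω => (L0 ω, A0 ω, L1 ω)) inferInstance)
      (hL0.prodMk (hA0.prodMk hL1)).comap_le Y11 A1 P)
    -- propensities
    (g0 g1 : Ω → ℝ)
    (hg0 : g0 =ᵐ[P]
      P[(fun ω => if A0 ω then (1 : ℝ) else 0) | MeasurableSpace.comap L0 inferInstance])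
    (hg1 : g1 =ᵐ[P]
      P[(fun ω => if A1 ω then (1 : ℝ) else 0) |
        MeasurableSpace.comap (fun ω => (L0 ω, A0 ω, L1 ω)) inferInstance])
    -- positivity
    (η : ℝ) (hη : 0 < η) (hpos0 : ∀ᵐ ω ∂P, η ≤ g0 ω) (hpos1 : ∀ᵐ ω ∂P, η ≤ g1 ω)
    -- iterated conditional mean outcomes
    (Q2 : Ω → ℝ)
    (hQ2_meas :
      Measurable[MeasurableSpace.comap (fun ω => (L0 ω, A0 ω, L1 ω)) inferInstance] Q2)
    (hQ2_bdd : ∃ B : ℝ, ∀ᵐ ω ∂P, |Q2 ω| ≤ B)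
    (hQ2 : (fun ω => Q2 ω * g1 ω) =ᵐ[P]
      P[(fun ω => (if A1 ω then (1 : ℝ) else 0) * Y ω) |
        MeasurableSpace.comap (fun ω => (L0 ω, A0 ω, L1 ω)) inferInstance])
    (Q1 : Ω → ℝ)
    (hQ1_meas : Measurable[MeasurableSpace.comap L0 inferInstance] Q1)
    (hQ1_bdd : ∃ B : ℝ, ∀ᵐ ω ∂P, |Q1 ω| ≤ B)
    (hQ1 : (fun ω => Q1 ω * g0 ω) =ᵐ[P]
      P[(fun ω => (if A0 ω then (1 : ℝ) else 0) * Q2 ω) |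
        MeasurableSpace.comap L0 inferInstance]) :
    ∫ ω, Q1 ω ∂P = ∫ ω, Y11 ω ∂P :=
  longitudinal_gcomp_identification_general P L0 hL0 A0 hA0 L1 hL1 A1 hA1 Y hY L1p Y11 hY11 hYbdd
    hY11bdd hconsY hexch0 hexch1 g0 g1 hg0 hg1 η hη hpos0 hpos1 Q2 hQ2 Q1 hQ1
end

section
/- Let (Lᵢ, Aᵢ, Yᵢ, Yᵢ¹)_{i ≥ 1} be an i.i.d. sequence of random elements on a probability space (Ω, ℱ, P), each copy satisfying the point-treatment causal setup with a fixed measurable propensity function e : S → ℝ, i.e. e ∘ L₁ is a version of E[1_{A₁=1} | σ(L₁)], with η ≤ e(x) ≤ 1 for all x ∈ S and some η > 0; Y₁ = Y₁¹ P-almost surely on {A₁ = 1}; Y₁¹ and A₁ conditionally independent given σ(L₁); and Y₁, Y₁¹ P-almost surely bounded. Then the Hájek inverse probability weighting estimator is strongly consistent: P-almost surely, (Σ_{i=1}^{n} 1_{Aᵢ=1} Yᵢ / e(Lᵢ)) / (Σ_{i=1}^{n} 1_{Aᵢ=1} / e(Lᵢ)) → E[Y₁¹] as n → ∞. -/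
/-!
Conditioning on `σ(L)`, the pull-out property together with `E[1_{A=1} | L] = e(L)` and the
conditional independence of `Y¹` and `A` gives `E[1_{A=1} 1_{Y¹ ∈ B} / e(L)] = P(Y¹ ∈ B)` for
every Borel `B`. So reweighting `P` by `1_{A=1} / e(L)` leaves the law of `Y¹` unchanged, whence
`E[1_{A=1} Y¹ / e(L)] = E[Y¹]` and `E[1_{A=1} / e(L)] = 1`; by consistency the first is also the
mean of `1_{A=1} Y / e(L)`. The strong law of large numbers, applied to the numerator and the
denominator of the Hájek ratio after dividing both by `n`, concludes.
-/

open MeasureTheory ProbabilityTheory Filter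

section InverseProbabilityWeighting

variable {Ω : Type*} {m mΩ : MeasurableSpace Ω} {P : Measure Ω} {t : Set Ω} {p : Ω → ℝ}

theorem ae_nonneg_indicator_inv_of_condExp_ae_eq (hpt : P⟦t | m⟧ =ᵐ[P] p) :
    0 ≤ᵐ[P] t.indicator p⁻¹ := by
  have hind : 0 ≤ᵐ[P] t.indicator fun _ => (1 : ℝ) :=
    ae_of_all P (Set.indicator_nonneg fun _ _ => zero_le_one)
  filter_upwards [condExp_nonneg (m := m) hind, hpt] with ω hnonneg hpt
  exact Set.indicator_apply_nonneg fun _ => inv_nonneg.2 (hpt ▸ hnonneg)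

variable [IsFiniteMeasure P]

theorem setIntegral_indicator_inv_eq_measureReal (hm : m ≤ mΩ) {s : Set Ω}
    (hs : MeasurableSet s) (ht : MeasurableSet t) (hp : Measurable[m] p)
    (hp_int : Integrable p⁻¹ P) (hp0 : ∀ᵐ ω ∂P, p ω ≠ 0) (hpt : P⟦t | m⟧ =ᵐ[P] p)
    (hst : P⟦s ∩ t | m⟧ =ᵐ[P] P⟦s | m⟧ * P⟦t | m⟧) :
    ∫ ω in s, t.indicator p⁻¹ ω ∂P = P.real s := by
  have hind_int : Integrable ((s ∩ t).indicator fun _ => (1 : ℝ)) P :=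
    (integrable_const 1).indicator (hs.inter ht)
  have hprod : (s ∩ t).indicator p⁻¹ = p⁻¹ * (s ∩ t).indicator fun _ => (1 : ℝ) := by
    ext ω; by_cases h : ω ∈ s ∩ t <;> simp [h]
  calc ∫ ω in s, t.indicator p⁻¹ ω ∂P
      = ∫ ω, (p⁻¹ * (s ∩ t).indicator fun _ => (1 : ℝ)) ω ∂P := by
        rw [← integral_indicator hs, Set.indicator_indicator, hprod]
    _ = ∫ ω, (p⁻¹ * P⟦s ∩ t | m⟧) ω ∂P := by
        rw [← integral_condExp hm]
        refine integral_congr_ae (condExp_mul_of_stronglyMeasurable_left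
          hp.inv.stronglyMeasurable ?_ hind_int)
        rw [← hprod]
        exact hp_int.indicator (hs.inter ht)
    _ = ∫ ω, (P⟦s | m⟧) ω ∂P := by
        refine integral_congr_ae ?_
        filter_upwards [hst, hpt, hp0] with ω hst hpt hp0
        simp only [Pi.mul_apply, Pi.inv_apply, hst, hpt]
        field_simp
    _ = P.real s := by
        rw [integral_condExp hm]; exact integral_indicator_one hs

variable {β : Type*} [MeasurableSpace β] {X : Ω → β}

theorem map_withDensity_indicator_inv_eq_map (hm : m ≤ mΩ) (hX : Measurable X)
    (ht : MeasurableSet t) (hp : Measurable[m] p) (hp_int : Integrable p⁻¹ P)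
    (hp0 : ∀ᵐ ω ∂P, p ω ≠ 0) (hpt : P⟦t | m⟧ =ᵐ[P] p)
    (hXt : ∀ B, MeasurableSet B → P⟦X ⁻¹' B ∩ t | m⟧ =ᵐ[P] P⟦X ⁻¹' B | m⟧ * P⟦t | m⟧) :
    (P.withDensity fun ω => ENNReal.ofReal (t.indicator p⁻¹ ω)).map X = P.map X := by
  ext B hB
  rw [Measure.map_apply hX hB, Measure.map_apply hX hB, withDensity_apply _ (hX hB),
    ← ofReal_integral_eq_lintegral_ofReal (hp_int.indicator ht).restrict
      (ae_restrict_of_ae (ae_nonneg_indicator_inv_of_condExp_ae_eq hpt)),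
    setIntegral_indicator_inv_eq_measureReal hm (hX hB) ht hp hp_int hp0 hpt (hXt B hB),
    ofReal_measureReal]

theorem integral_indicator_inv_smul_comp_eq {E : Type*} [NormedAddCommGroup E] [NormedSpace ℝ E]
    (hm : m ≤ mΩ) (hX : Measurable X) {g : β → E} (hg : StronglyMeasurable g)
    (ht : MeasurableSet t) (hp : Measurable[m] p) (hp_int : Integrable p⁻¹ P)
    (hp0 : ∀ᵐ ω ∂P, p ω ≠ 0) (hpt : P⟦t | m⟧ =ᵐ[P] p)
    (hXt : ∀ B, MeasurableSet B → P⟦X ⁻¹' B ∩ t | m⟧ =ᵐ[P] P⟦X ⁻¹' B | m⟧ * P⟦t | m⟧) :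
    ∫ ω, t.indicator p⁻¹ ω • g (X ω) ∂P = ∫ ω, g (X ω) ∂P := by
  have hw : Measurable (t.indicator p⁻¹) := (hp.mono hm le_rfl).inv.indicator ht
  calc ∫ ω, t.indicator p⁻¹ ω • g (X ω) ∂P
      = ∫ ω, (ENNReal.ofReal (t.indicator p⁻¹ ω)).toReal • g (X ω) ∂P := by
        refine integral_congr_ae ?_
        filter_upwards [ae_nonneg_indicator_inv_of_condExp_ae_eq hpt] with ω hω
        rw [ENNReal.toReal_ofReal hω]
    _ = ∫ ω, g (X ω) ∂(P.withDensity fun ω => ENNReal.ofReal (t.indicator p⁻¹ ω)) :=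
        (integral_withDensity_eq_integral_toReal_smul (ENNReal.measurable_ofReal.comp hw)
          (ae_of_all _ fun _ => ENNReal.ofReal_lt_top) _).symm
    _ = ∫ ω, g (X ω) ∂P := by
        rw [← integral_map hX.aemeasurable hg.aestronglyMeasurable,
          map_withDensity_indicator_inv_eq_map hm hX ht hp hp_int hp0 hpt hXt,
          integral_map hX.aemeasurable hg.aestronglyMeasurable]

end InverseProbabilityWeighting

theorem ae_tendsto_sum_comp_div_sum_comp {Ω γ : Type*} [MeasurableSpace Ω] [MeasurableSpace γ]
    {P : Measure Ω} {Z : ℕ → Ω → γ} (hindep : iIndepFun Z P)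
    (hident : ∀ i, IdentDistrib (Z i) (Z 0) P P) {φ ψ : γ → ℝ} (hφ : Measurable φ)
    (hψ : Measurable ψ) (hφ_int : Integrable (fun ω => φ (Z 0 ω)) P)
    (hψ_int : Integrable (fun ω => ψ (Z 0 ω)) P) (hψ0 : ∫ ω, ψ (Z 0 ω) ∂P ≠ 0) :
    ∀ᵐ ω ∂P, Tendsto (fun n => (∑ i ∈ Finset.range n, φ (Z i ω)) / ∑ i ∈ Finset.range n, ψ (Z i ω))
      atTop (nhds ((∫ ω, φ (Z 0 ω) ∂P) / ∫ ω, ψ (Z 0 ω) ∂P)) := by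
  have strong_law (f : γ → ℝ) (hf : Measurable f) (hint : Integrable (fun ω => f (Z 0 ω)) P) :=
    strong_law_ae_real (fun i ω => f (Z i ω)) hint
      (fun i j hij => (hindep.indepFun hij).comp hf hf) (fun i => (hident i).comp hf)
  filter_upwards [strong_law φ hφ hφ_int, strong_law ψ hψ hψ_int] with ω hφω hψω
  refine (hφω.div hψω hψ0).congr' ?_
  filter_upwards [eventually_ge_atTop 1] with n hn
  exact div_div_div_cancel_right₀ (by positivity) _ _

section PointTreatment

variable {Ω S β : Type*} {L : Ω → S} {A : Ω → Bool} {e : S → ℝ} {η : ℝ}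

theorem ite_div_eq_indicator_inv (ω : Ω) :
    (if A ω then (1 : ℝ) else 0) / e (L ω) = (A ⁻¹' {true}).indicator (fun ω => (e (L ω))⁻¹) ω := by
  by_cases h : A ω <;> simp [h]

variable [MeasurableSpace Ω] [MeasurableSpace S] [MeasurableSpace β]
  {P : Measure Ω} [IsFiniteMeasure P]

theorem integrable_inv_comp_of_le (hL : Measurable L) (he_meas : Measurable e) (hη : 0 < η)
    (he_lb : ∀ x, η ≤ e x) : Integrable (fun ω => (e (L ω))⁻¹) P := by
  refine .of_bound (he_meas.comp hL).inv.aestronglyMeasurable η⁻¹ (ae_of_all _ fun ω => ?_)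
  simpa [abs_of_pos (hη.trans_le (he_lb (L ω)))] using inv_anti₀ hη (he_lb (L ω))

theorem integrable_ite_div_comp_of_le (hL : Measurable L) (hA : Measurable A)
    (he_meas : Measurable e) (hη : 0 < η) (he_lb : ∀ x, η ≤ e x) :
    Integrable (fun ω => (if A ω then (1 : ℝ) else 0) / e (L ω)) P := by
  simpa only [ite_div_eq_indicator_inv] using
    (integrable_inv_comp_of_le hL he_meas hη he_lb).indicator (hA (measurableSet_singleton true))

theorem integral_ite_div_comp_mul_comp_eq [StandardBorelSpace Ω] [Nonempty Ω]
    {Y1 : Ω → β} (hL : Measurable L) (hA : Measurable A) (hY1 : Measurable Y1)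
    (he_meas : Measurable e) (hη : 0 < η) (he_lb : ∀ x, η ≤ e x)
    (he : (fun ω => e (L ω)) =ᵐ[P]
      P[(fun ω => if A ω then (1 : ℝ) else 0) | MeasurableSpace.comap L inferInstance])
    (hexch : CondIndepFun (MeasurableSpace.comap L inferInstance) hL.comap_le Y1 A P)
    {g : β → ℝ} (hg : StronglyMeasurable g) :
    ∫ ω, (if A ω then (1 : ℝ) else 0) / e (L ω) * g (Y1 ω) ∂P = ∫ ω, g (Y1 ω) ∂P := by
  have ht : MeasurableSet (A ⁻¹' {true}) := hA (measurableSet_singleton true)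
  have hpt : P⟦A ⁻¹' {true} | MeasurableSpace.comap L inferInstance⟧ =ᵐ[P]
      fun ω => e (L ω) := by
    convert he.symm using 2
    ext ω; by_cases h : A ω <;> simp [h]
  have hY1t B (hB : MeasurableSet B) := (condIndepFun_iff_condExp_inter_preimage_eq_mul hY1
    hA).1 hexch B {true} hB (measurableSet_singleton true)
  simp only [ite_div_eq_indicator_inv]
  exact integral_indicator_inv_smul_comp_eq hL.comap_le hY1 hg ht
    (he_meas.comp (comap_measurable L)) (integrable_inv_comp_of_le hL he_meas hη he_lb)
    (ae_of_all _ fun ω => (hη.trans_le (he_lb (L ω))).ne') hpt hY1t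

end PointTreatment

theorem hajek_ipw_strongly_consistent_general
    {Ω S : Type*} [MeasurableSpace Ω] [StandardBorelSpace Ω] [Nonempty Ω]
    [MeasurableSpace S]
    (P : Measure Ω) [IsProbabilityMeasure P]
    (L : ℕ → Ω → S) (A : ℕ → Ω → Bool) (Y Y1 : ℕ → Ω → ℝ)
    (hL : ∀ i, Measurable (L i)) (hA : ∀ i, Measurable (A i))
    (hY : ∀ i, Measurable (Y i)) (hY1 : ∀ i, Measurable (Y1 i))
    -- i.i.d.: the quadruples are independent and identically distributed
    (hindep : iIndepFun
      (fun i ω => (L i ω, A i ω, Y i ω, Y1 i ω)) P)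
    (hident : ∀ i, IdentDistrib (fun ω => (L i ω, A i ω, Y i ω, Y1 i ω))
      (fun ω => (L 0 ω, A 0 ω, Y 0 ω, Y1 0 ω)) P P)
    -- known propensity function, bounded in [η, 1]
    (e : S → ℝ) (he_meas : Measurable e)
    (η : ℝ) (hη : 0 < η) (he_lb : ∀ x, η ≤ e x)
    (he : (fun ω => e (L 0 ω)) =ᵐ[P]
      P[(fun ω => if A 0 ω then (1 : ℝ) else 0) |
        MeasurableSpace.comap (L 0) inferInstance])
    -- consistency: Y = Y¹ a.s. on {A = 1}
    (hcons : ∀ᵐ ω ∂P, A 0 ω = true → Y 0 ω = Y1 0 ω)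
    -- exchangeability: Y¹ ⫫ A | σ(L)
    (hexch : CondIndepFun (MeasurableSpace.comap (L 0) inferInstance)
      (hL 0).comap_le (Y1 0) (A 0) P)
    -- boundedness
    (hYbdd : ∃ B : ℝ, ∀ᵐ ω ∂P, |Y 0 ω| ≤ B) :
    ∀ᵐ ω ∂P, Tendsto (fun n : ℕ =>
        (∑ i ∈ Finset.range n, (if A i ω then (1 : ℝ) else 0) * Y i ω / e (L i ω)) /
        (∑ i ∈ Finset.range n, (if A i ω then (1 : ℝ) else 0) / e (L i ω)))
      atTop (nhds (∫ ω, Y1 0 ω ∂P)) := by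
  obtain ⟨B, hB⟩ := hYbdd
  let φ (x : S × Bool × ℝ × ℝ) : ℝ := (if x.2.1 then 1 else 0) * x.2.2.1 / e x.1
  let ψ (x : S × Bool × ℝ × ℝ) : ℝ := (if x.2.1 then 1 else 0) / e x.1
  have ipw {g : ℝ → ℝ} (hg : StronglyMeasurable g) :=
    integral_ite_div_comp_mul_comp_eq (hL 0) (hA 0) (hY1 0) he_meas hη he_lb he hexch hg
  have hψ_mean : ∫ ω, ψ (L 0 ω, A 0 ω, Y 0 ω, Y1 0 ω) ∂P = 1 := by
    simpa using ipw (stronglyMeasurable_const (b := (1 : ℝ)))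
  have hφ_mean : ∫ ω, φ (L 0 ω, A 0 ω, Y 0 ω, Y1 0 ω) ∂P = ∫ ω, Y1 0 ω ∂P := by
    refine (integral_congr_ae ?_).trans (ipw stronglyMeasurable_id)
    filter_upwards [hcons] with ω hω
    by_cases h : A 0 ω <;> simp [φ, h, hω, div_eq_inv_mul]
  have hψ_int : Integrable (fun ω => ψ (L 0 ω, A 0 ω, Y 0 ω, Y1 0 ω)) P :=
    integrable_ite_div_comp_of_le (hL 0) (hA 0) he_meas hη he_lb
  have hφ_int : Integrable (fun ω => φ (L 0 ω, A 0 ω, Y 0 ω, Y1 0 ω)) P := by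
    refine (hψ_int.mul_bdd (hY 0).aestronglyMeasurable hB).congr (ae_of_all _ fun ω => ?_)
    simp only [φ, ψ, mul_div_right_comm]
  have hite : Measurable fun x : S × Bool × ℝ × ℝ => if x.2.1 then (1 : ℝ) else 0 :=
    (Measurable.of_discrete (f := fun b : Bool => if b then (1 : ℝ) else 0)).comp (by fun_prop)
  have hajek := ae_tendsto_sum_comp_div_sum_comp hindep hident (by fun_prop) (by fun_prop)
    hφ_int hψ_int (hψ_mean ▸ one_ne_zero)
  rwa [hφ_mean, hψ_mean, div_one] at hajek

/-- Strong consistency of the Hájek inverse probability weighting estimator: for an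
i.i.d. sequence `(Lᵢ, Aᵢ, Yᵢ, Yᵢ¹)` satisfying the point-treatment causal setup with a
known propensity function `e` bounded in `[η, 1]`, the ratio of the sum of
inverse-propensity-weighted observed outcomes of the treated to the sum of their weights
converges almost surely to `E[Y¹]`. -/
theorem hajek_ipw_strongly_consistent
    {Ω S : Type*} [MeasurableSpace Ω] [StandardBorelSpace Ω] [Nonempty Ω]
    [MeasurableSpace S] [StandardBorelSpace S]
    (P : Measure Ω) [IsProbabilityMeasure P]
    (L : ℕ → Ω → S) (A : ℕ → Ω → Bool) (Y Y1 : ℕ → Ω → ℝ)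
    (hL : ∀ i, Measurable (L i)) (hA : ∀ i, Measurable (A i))
    (hY : ∀ i, Measurable (Y i)) (hY1 : ∀ i, Measurable (Y1 i))
    -- i.i.d.: the quadruples are independent and identically distributed
    (hindep : iIndepFun
      (fun i ω => (L i ω, A i ω, Y i ω, Y1 i ω)) P)
    (hident : ∀ i, IdentDistrib (fun ω => (L i ω, A i ω, Y i ω, Y1 i ω))
      (fun ω => (L 0 ω, A 0 ω, Y 0 ω, Y1 0 ω)) P P)
    -- known propensity function, bounded in [η, 1]
    (e : S → ℝ) (he_meas : Measurable e)
    (η : ℝ) (hη : 0 < η) (he_lb : ∀ x, η ≤ e x) (he_ub : ∀ x, e x ≤ 1)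
    (he : (fun ω => e (L 0 ω)) =ᵐ[P]
      P[(fun ω => if A 0 ω then (1 : ℝ) else 0) |
        MeasurableSpace.comap (L 0) inferInstance])
    -- consistency: Y = Y¹ a.s. on {A = 1}
    (hcons : ∀ᵐ ω ∂P, A 0 ω = true → Y 0 ω = Y1 0 ω)
    -- exchangeability: Y¹ ⫫ A | σ(L)
    (hexch : CondIndepFun (MeasurableSpace.comap (L 0) inferInstance)
      (hL 0).comap_le (Y1 0) (A 0) P)
    -- boundedness
    (hYbdd : ∃ B : ℝ, ∀ᵐ ω ∂P, |Y 0 ω| ≤ B)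
    (hY1bdd : ∃ B : ℝ, ∀ᵐ ω ∂P, |Y1 0 ω| ≤ B) :
    ∀ᵐ ω ∂P, Tendsto (fun n : ℕ =>
        (∑ i ∈ Finset.range n, (if A i ω then (1 : ℝ) else 0) * Y i ω / e (L i ω)) /
        (∑ i ∈ Finset.range n, (if A i ω then (1 : ℝ) else 0) / e (L i ω)))
      atTop (nhds (∫ ω, Y1 0 ω ∂P)) :=
  hajek_ipw_strongly_consistent_general P L A Y Y1 hL hA hY hY1 hindep hident e he_meas η hη he_lb
    he hcons hexch hYbdd
end
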